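/- arXiv:2303.10950 — 4 statements merged into one kernel-verified Lean document; each statement's English description precedes it below -/
import Mathlib

section
/- Let H ∈ ℝ^{N×N} be a real matrix whose eigenvalues are all real and simple, and let S_h ∈ ℂ^{N×N} be a family of complex matrices depending smoothly on h ∈ ℝ such that conj(S_h) = S_h^{-1} and S_h = exp(ihH) + O(h^{p+1}) as h → 0 for some p ≥ 1. Then there exists a constant C > 0 such that, provided |h| is small enough, for all u ∈ ℂ^N and all eigenvalues ω of H one has sup_{n ≥ 0} | |Π_ω S_h^n u| − |Π_ω u| | ≤ C |h|^p |u|, where Π_ω denotes the spectral projector onto Ker(H − ωI_N) and |·| is the Euclidean norm on ℂ^N. -/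
open Matrix Filter Asymptotics

attribute [local instance] Matrix.normedAddCommGroup Matrix.normedSpace

/-- The Euclidean norm of a vector `v ∈ ℂ^N`. -/
noncomputable def euclNorm {N : ℕ} (v : Fin N → ℂ) : ℝ :=
  ‖(WithLp.equiv 2 (Fin N → ℂ)).symm v‖

/-- The spectral projector of `H = Q * diagonal d * Q⁻¹` (with `d` injective) onto the
eigenspace `Ker (H - d j • 1)`, viewed as a complex matrix. -/
noncomputable def spectralProj {N : ℕ} (Q : Matrix (Fin N) (Fin N) ℝ) (j : Fin N) :
    Matrix (Fin N) (Fin N) ℂ :=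
  (Q * Matrix.diagonal (fun k => if k = j then (1 : ℝ) else 0) * Q⁻¹).map Complex.ofReal

variable {N : ℕ}

lemma matEntry_le (A : Matrix (Fin N) (Fin N) ℂ) (i j : Fin N) : ‖A i j‖ ≤ ‖A‖ :=
  le_trans (norm_le_pi_norm (A i) j) (norm_le_pi_norm A i)

lemma matNorm_le {A : Matrix (Fin N) (Fin N) ℂ} {c : ℝ} (hc : 0 ≤ c)
    (h : ∀ i j, ‖A i j‖ ≤ c) : ‖A‖ ≤ c := by
  exact (Matrix.norm_le_iff hc).2 h

lemma diagMul_norm_le (w : Fin N → ℂ) (hw : ∀ k, ‖w k‖ ≤ 1) (A : Matrix (Fin N) (Fin N) ℂ) :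
    ‖Matrix.diagonal w * A‖ ≤ ‖A‖ := by
  refine matNorm_le (norm_nonneg _) fun i j => ?_
  rw [Matrix.diagonal_mul]
  calc ‖w i * A i j‖ = ‖w i‖ * ‖A i j‖ := norm_mul _ _
    _ ≤ 1 * ‖A‖ := mul_le_mul (hw i) (matEntry_le A i j) (norm_nonneg _) zero_le_one
    _ = ‖A‖ := one_mul _

lemma mulVec_entry_le (A : Matrix (Fin N) (Fin N) ℂ) (v : Fin N → ℂ) (i : Fin N) :
    ‖A.mulVec v i‖ ≤ N * (‖A‖ * ‖v‖) := by
  rw [Matrix.mulVec, dotProduct]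
  calc ‖∑ k, A i k * v k‖ ≤ ∑ k : Fin N, ‖A i k * v k‖ := norm_sum_le _ _
    _ ≤ ∑ _k : Fin N, ‖A‖ * ‖v‖ := by
        refine Finset.sum_le_sum fun k _ => ?_
        rw [norm_mul]
        exact mul_le_mul (matEntry_le A i k) (norm_le_pi_norm v k) (norm_nonneg _) (norm_nonneg _)
    _ = N * (‖A‖ * ‖v‖) := by simp [Finset.sum_const, nsmul_eq_mul]

lemma mulVec_norm_le (A : Matrix (Fin N) (Fin N) ℂ) (v : Fin N → ℂ) :
    ‖A.mulVec v‖ ≤ N * (‖A‖ * ‖v‖) := by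
  refine pi_norm_le_iff_of_nonneg (by positivity) |>.2 fun i => mulVec_entry_le A v i

lemma isUnit_one_add {W : Matrix (Fin N) (Fin N) ℂ} (h : (N:ℝ) * ‖W‖ < 1) :
    IsUnit (1 + W).det := by
  rw [isUnit_iff_ne_zero]
  intro hdet
  obtain ⟨v, hv, hveq⟩ := (Matrix.exists_mulVec_eq_zero_iff).2 hdet
  rw [Matrix.add_mulVec, Matrix.one_mulVec] at hveq
  have h1 : ‖v‖ = ‖W.mulVec v‖ := by
    have h0 : v = -(W.mulVec v) := by linear_combination hveq
    have := congrArg (fun x => ‖x‖) h0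
    simpa using this
  have h2 : ‖W.mulVec v‖ ≤ (N * ‖W‖) * ‖v‖ := by
    simpa [mul_assoc] using mulVec_norm_le W v
  have hvpos : 0 < ‖v‖ := norm_pos_iff.2 hv
  nlinarith [norm_nonneg (W.mulVec v)]

lemma matMul_norm_le (A B : Matrix (Fin N) (Fin N) ℂ) : ‖A * B‖ ≤ N * (‖A‖ * ‖B‖) := by
  refine pi_norm_le_iff_of_nonneg (by positivity) |>.2 fun i =>
    pi_norm_le_iff_of_nonneg (by positivity) |>.2 fun j => ?_
  rw [Matrix.mul_apply]
  calc ‖∑ k, A i k * B k j‖ ≤ ∑ k : Fin N, ‖A i k * B k j‖ := norm_sum_le _ _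
    _ ≤ ∑ _k : Fin N, ‖A‖ * ‖B‖ := by
        refine Finset.sum_le_sum fun k _ => ?_
        rw [norm_mul]
        exact mul_le_mul (matEntry_le A i k) (matEntry_le B k j) (norm_nonneg _) (norm_nonneg _)
    _ = N * (‖A‖ * ‖B‖) := by simp [Finset.sum_const, nsmul_eq_mul]

lemma matNorm_one : ‖(1 : Matrix (Fin N) (Fin N) ℂ)‖ ≤ 1 := by
  refine pi_norm_le_iff_of_nonneg zero_le_one |>.2 fun i =>
    pi_norm_le_iff_of_nonneg zero_le_one |>.2 fun j => ?_
  rw [Matrix.one_apply]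
  split <;> simp

lemma inv_one_add_bounds {W : Matrix (Fin N) (Fin N) ℂ} (h : (N:ℝ) * ‖W‖ ≤ 1/2) :
    IsUnit (1 + W).det ∧ ‖(1 + W)⁻¹‖ ≤ 2 ∧ ‖(1 + W)⁻¹ - 1‖ ≤ 2 * ((N:ℝ) * ‖W‖) := by
  have hunit : IsUnit (1 + W).det := isUnit_one_add (lt_of_le_of_lt h (by norm_num))
  have hinv := Matrix.mul_nonsing_inv (1 + W) hunit
  set B := (1 + W)⁻¹ with hB
  rw [add_mul, one_mul] at hinv
  have hBeq : B = 1 - W * B := eq_sub_of_add_eq hinv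
  have hWB : ‖W * B‖ ≤ (N * ‖W‖) * ‖B‖ := by simpa [mul_assoc] using matMul_norm_le W B
  have hBnorm : ‖B‖ ≤ 2 := by
    have h1 : ‖B‖ ≤ 1 + (N * ‖W‖) * ‖B‖ := by
      calc ‖B‖ = ‖1 - W * B‖ := by rw [← hBeq]
        _ ≤ ‖(1 : Matrix (Fin N) (Fin N) ℂ)‖ + ‖W * B‖ := norm_sub_le _ _
        _ ≤ 1 + (N * ‖W‖) * ‖B‖ := add_le_add matNorm_one hWB
    nlinarith [norm_nonneg B]
  refine ⟨hunit, hBnorm, ?_⟩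
  have hd : B - 1 = -(W * B) := by rw [← hinv]; abel
  rw [hd, norm_neg]
  calc ‖W * B‖ ≤ (N * ‖W‖) * ‖B‖ := hWB
    _ ≤ (N * ‖W‖) * 2 := by
        refine mul_le_mul_of_nonneg_left hBnorm (by positivity)
    _ = 2 * ((N:ℝ) * ‖W‖) := by ring

lemma sin_lower {θ : ℝ} (hθ : |θ| ≤ 1) : |θ| / 2 ≤ |Real.sin θ| := by
  rcases le_or_gt 0 θ with h0 | h0
  · rcases eq_or_lt_of_le h0 with rfl | h0'
    · simp
    · have hθ1 : θ ≤ 1 := by rwa [abs_of_nonneg h0] at hθ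
      have hcube : θ ^ 3 ≤ θ := by
        have hfac : 0 ≤ θ * ((1 - θ) * (1 + θ)) :=
          mul_nonneg h0 (mul_nonneg (by linarith) (by linarith))
        nlinarith [hfac]
      have := Real.sin_gt_sub_cube h0'
      have hs : 0 ≤ Real.sin θ := by linarith
      rw [abs_of_nonneg h0, abs_of_nonneg hs]; linarith
  · have hθ' : 0 < -θ := by linarith
    have habs : |θ| = -θ := abs_of_neg h0
    have hθ1 : -θ ≤ 1 := by rwa [habs] at hθ
    have hcube : (-θ) ^ 3 ≤ -θ := by
      have hfac : 0 ≤ (-θ) * ((1 - -θ) * (1 + -θ)) :=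
        mul_nonneg hθ'.le (mul_nonneg (by linarith) (by linarith))
      nlinarith [hfac]
    have := Real.sin_gt_sub_cube hθ'
    rw [Real.sin_neg] at this
    have hs : Real.sin θ ≤ 0 := by linarith
    rw [habs, abs_of_nonpos hs]; linarith

lemma exp_I_sub_one_lower {θ : ℝ} (hθ : |θ| ≤ 1) :
    |θ| / 2 ≤ ‖Complex.exp ((θ : ℂ) * Complex.I) - 1‖ := by
  have him := Complex.abs_im_le_norm (Complex.exp ((θ : ℂ) * Complex.I) - 1)
  rw [Complex.sub_im, Complex.one_im, sub_zero, Complex.exp_ofReal_mul_I_im] at him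
  exact le_trans (sin_lower hθ) him

lemma gap_exp {a b : ℝ} (hab : |a - b| ≤ 1) :
    |a - b| / 2 ≤ ‖Complex.exp ((a:ℂ) * Complex.I) - Complex.exp ((b:ℂ) * Complex.I)‖ := by
  have factored : Complex.exp ((a:ℂ) * Complex.I) - Complex.exp ((b:ℂ) * Complex.I)
      = Complex.exp ((b:ℂ) * Complex.I) * (Complex.exp (((a - b : ℝ) : ℂ) * Complex.I) - 1) := by
    rw [mul_sub, ← Complex.exp_add, mul_one]
    push_cast
    ring_nf
  rw [factored, norm_mul, Complex.norm_exp_ofReal_mul_I, one_mul]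
  exact exp_I_sub_one_lower hab

lemma div_sub_div_split (A A' a a' : ℂ) (ha : a ≠ 0) (ha' : a' ≠ 0) :
    A/a - A'/a' = (A - A')/a + A' * (a' - a)/(a*a') := by
  field_simp
  ring

set_option maxHeartbeats 1000000 in
lemma core (hN1 : (1:ℝ) ≤ N) (D0 : Fin N → ℂ) (E : Matrix (Fin N) (Fin N) ℂ)
    {δh β : ℝ} (hβ0 : 0 ≤ β) (hδ : 0 < δh)
    (hgap : ∀ k l : Fin N, k ≠ l → δh ≤ ‖D0 k - D0 l‖) (hE : ‖E‖ ≤ β)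
    (hsmall : 64 * (N:ℝ)^3 * β ≤ δh) :
    ∃ (W : Matrix (Fin N) (Fin N) ℂ) (Λ : Fin N → ℂ),
      ‖W‖ ≤ 8*(N:ℝ)*β/δh ∧
      (Matrix.diagonal D0 + E) * (1 + W) = (1 + W) * Matrix.diagonal Λ ∧
      ∀ k, ‖Λ k - D0 k‖ ≤ 2*β := by
  have hN0 : (0:ℝ) < N := lt_of_lt_of_le zero_lt_one hN1
  have hN3 : (N:ℝ) ≤ (N:ℝ)^3 := by nlinarith [sq_nonneg ((N:ℝ) - 1), sq_nonneg (N:ℝ)]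
  have hN2 : (N:ℝ)^2 ≤ (N:ℝ)^3 := by nlinarith
  have h13 : (1:ℝ) ≤ (N:ℝ)^3 := by nlinarith
  have hNβ64 : 64 * (N:ℝ) * β ≤ δh := by nlinarith
  have hN2β64 : 64 * (N:ℝ)^2 * β ≤ δh := by nlinarith
  have hβ64 : 64 * β ≤ δh := by nlinarith
  set r : ℝ := 8*(N:ℝ)*β/δh with hr
  have hr0 : 0 ≤ r := by positivity
  have hNβr : (N:ℝ) * (β * r) ≤ β := by
    rw [hr]
    rw [show (N:ℝ) * (β * (8 * ↑N * β / δh)) = 8 * ((N:ℝ)^2 * β) * β / δh by ring,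
      div_le_iff₀ hδ]
    nlinarith [mul_le_mul_of_nonneg_right hN2β64 hβ0]
  -- the numerator map
  set A : Matrix (Fin N) (Fin N) ℂ → Matrix (Fin N) (Fin N) ℂ := fun W => E * (1 + W) with hA
  set lam : Matrix (Fin N) (Fin N) ℂ → Fin N → ℂ := fun W l => D0 l + A W l l with hlam
  set Φ : Matrix (Fin N) (Fin N) ℂ → Matrix (Fin N) (Fin N) ℂ := fun W =>
    Matrix.of fun k l => if k = l then 0 else A W k l / (lam W l - D0 k) with hΦ
  -- numerator bound
  have keyA : ∀ W : Matrix (Fin N) (Fin N) ℂ, ‖W‖ ≤ r → ‖A W‖ ≤ 2*β := by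
    intro W hW
    have h1 : A W = E + E * W := by rw [hA]; simp [mul_add]
    rw [h1]
    calc ‖E + E * W‖ ≤ ‖E‖ + ‖E * W‖ := norm_add_le _ _
      _ ≤ β + (N:ℝ) * (β * r) := by
          refine add_le_add hE ?_
          refine le_trans (matMul_norm_le E W) ?_
          have : ‖E‖ * ‖W‖ ≤ β * r := mul_le_mul hE hW (norm_nonneg _) hβ0
          exact mul_le_mul_of_nonneg_left this (by positivity)
      _ ≤ 2*β := by linarith
  -- difference of numerators
  have keyD : ∀ W W' : Matrix (Fin N) (Fin N) ℂ, ‖A W - A W'‖ ≤ (N:ℝ) * (β * ‖W - W'‖) := by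
    intro W W'
    have h1 : A W - A W' = E * (W - W') := by rw [hA]; simp [mul_add, mul_sub]
    rw [h1]
    refine le_trans (matMul_norm_le E (W - W')) ?_
    have : ‖E‖ * ‖W - W'‖ ≤ β * ‖W - W'‖ :=
      mul_le_mul_of_nonneg_right hE (norm_nonneg _)
    exact mul_le_mul_of_nonneg_left this (by positivity)
  -- denominator bound
  have keyden : ∀ W : Matrix (Fin N) (Fin N) ℂ, ‖W‖ ≤ r → ∀ k l : Fin N, k ≠ l →
      δh/2 ≤ ‖lam W l - D0 k‖ := by
    intro W hW k l hkl
    have h1 : (D0 l - D0 k) = (lam W l - D0 k) - A W l l := by rw [hlam]; ring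
    have h2 : δh ≤ ‖(lam W l - D0 k) - A W l l‖ := h1 ▸ hgap l k (Ne.symm hkl)
    have h3 : ‖(lam W l - D0 k) - A W l l‖ ≤ ‖lam W l - D0 k‖ + ‖A W l l‖ := norm_sub_le _ _
    have h4 : ‖A W l l‖ ≤ 2*β := le_trans (matEntry_le _ l l) (keyA W hW)
    linarith
  have hδ2 : (0:ℝ) < δh/2 := by linarith
  -- Φ maps the ball to the ball
  have keymap : ∀ W : Matrix (Fin N) (Fin N) ℂ, ‖W‖ ≤ r → ‖Φ W‖ ≤ r := by
    intro W hW
    refine matNorm_le hr0 fun k l => ?_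
    rw [hΦ]
    simp only [Matrix.of_apply]
    rcases eq_or_ne k l with rfl | hkl
    · simpa using hr0
    · rw [if_neg hkl, norm_div]
      have h1 : ‖A W k l‖ ≤ 2*β := le_trans (matEntry_le _ k l) (keyA W hW)
      have h2 : δh/2 ≤ ‖lam W l - D0 k‖ := keyden W hW k l hkl
      calc ‖A W k l‖ / ‖lam W l - D0 k‖ ≤ (2*β) / (δh/2) := by gcongr
        _ ≤ r := by
            rw [hr, div_le_div_iff₀ hδ2 hδ]
            nlinarith [mul_le_mul_of_nonneg_right hN1 (mul_nonneg hβ0 hδ.le)]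
  -- contraction estimate
  have keycontr : ∀ W W' : Matrix (Fin N) (Fin N) ℂ, ‖W‖ ≤ r → ‖W'‖ ≤ r →
      ‖Φ W - Φ W'‖ ≤ (1/2) * ‖W - W'‖ := by
    intro W W' hW hW'
    set D := ‖W - W'‖ with hD
    have hD0 : 0 ≤ D := norm_nonneg _
    refine matNorm_le (by positivity) fun k l => ?_
    rcases eq_or_ne k l with rfl | hkl
    · simp only [Matrix.sub_apply, hΦ, Matrix.of_apply, if_pos rfl]
      simpa using by positivity
    · have ha : δh/2 ≤ ‖lam W l - D0 k‖ := keyden W hW k l hkl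
      have ha' : δh/2 ≤ ‖lam W' l - D0 k‖ := keyden W' hW' k l hkl
      have hane : lam W l - D0 k ≠ 0 := by
        intro h0; rw [h0, norm_zero] at ha; linarith
      have ha'ne : lam W' l - D0 k ≠ 0 := by
        intro h0; rw [h0, norm_zero] at ha'; linarith
      have hnum : ‖A W k l - A W' k l‖ ≤ (N:ℝ) * (β * D) := by
        have := matEntry_le (A W - A W') k l
        simp only [Matrix.sub_apply] at this
        exact le_trans this (keyD W W')
      have hden : ‖(lam W l - D0 k) - (lam W' l - D0 k)‖ ≤ (N:ℝ) * (β * D) := by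
        have h1 : (lam W l - D0 k) - (lam W' l - D0 k) = (A W - A W') l l := by
          simp only [hlam, Matrix.sub_apply]; ring
        rw [h1]
        exact le_trans (matEntry_le _ l l) (keyD W W')
      have hA'b : ‖A W' k l‖ ≤ 2*β := le_trans (matEntry_le _ k l) (keyA W' hW')
      have hsplit := div_sub_div_split (A W k l) (A W' k l)
        (lam W l - D0 k) (lam W' l - D0 k) hane ha'ne
      have hb1 : ‖(A W k l - A W' k l) / (lam W l - D0 k)‖ ≤ ((N:ℝ) * (β * D)) / (δh/2) := by
        rw [norm_div]
        exact div_le_div₀ (by positivity) hnum hδ2 ha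
      have hb2 : ‖A W' k l * ((lam W' l - D0 k) - (lam W l - D0 k))
            / ((lam W l - D0 k) * (lam W' l - D0 k))‖
          ≤ (2*β) * ((N:ℝ) * (β * D)) / ((δh/2) * (δh/2)) := by
        rw [norm_div, norm_mul, norm_mul]
        have hden2 : ‖(lam W' l - D0 k) - (lam W l - D0 k)‖ ≤ (N:ℝ) * (β * D) := by
          rw [← norm_neg]; simpa [neg_sub] using hden
        have hden2' : ‖A W' k l‖ * ‖(lam W' l - D0 k) - (lam W l - D0 k)‖
            ≤ (2*β) * ((N:ℝ) * (β * D)) :=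
          mul_le_mul hA'b hden2 (norm_nonneg _) (by positivity)
        exact div_le_div₀ (by positivity) hden2' (mul_pos hδ2 hδ2)
          (mul_le_mul ha ha' hδ2.le (norm_nonneg _))
      have hΦentry : ‖(Φ W - Φ W') k l‖
          ≤ ((N:ℝ) * (β * D)) / (δh/2) + (2*β) * ((N:ℝ) * (β * D)) / ((δh/2) * (δh/2)) := by
        simp only [Matrix.sub_apply, hΦ, Matrix.of_apply, if_neg hkl]
        rw [hsplit]
        exact le_trans (norm_add_le _ _) (add_le_add hb1 hb2)
      refine le_trans hΦentry ?_
      have e1 : ((N:ℝ) * (β * D)) / (δh/2) ≤ (1/4) * D := by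
        rw [div_le_iff₀ hδ2]
        nlinarith [mul_le_mul_of_nonneg_right hNβ64 hD0]
      have e2 : (2*β) * ((N:ℝ) * (β * D)) / ((δh/2) * (δh/2)) ≤ (1/4) * D := by
        rw [div_le_iff₀ (mul_pos hδ2 hδ2)]
        have hmm : (64 * (N:ℝ) * β) * (64 * β) ≤ δh * δh :=
          mul_le_mul hNβ64 hβ64 (by linarith) hδ.le
        nlinarith [mul_le_mul_of_nonneg_right hmm hD0]
      linarith
  -- fixed point on the closed ball
  haveI hcs : @CompleteSpace {W : Matrix (Fin N) (Fin N) ℂ // ‖W‖ ≤ r} (PseudoMetricSpace.toUniformSpace) :=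
    IsClosed.completeSpace_coe (hs := isClosed_le continuous_norm continuous_const)
  haveI hne : Nonempty {W : Matrix (Fin N) (Fin N) ℂ // ‖W‖ ≤ r} :=
    ⟨⟨0, by simpa using hr0⟩⟩
  set f : {W : Matrix (Fin N) (Fin N) ℂ // ‖W‖ ≤ r} →
      {W : Matrix (Fin N) (Fin N) ℂ // ‖W‖ ≤ r} :=
    fun W => ⟨Φ W.1, keymap W.1 W.2⟩ with hf
  have hL : LipschitzWith (1/2 : NNReal) f := by
    refine LipschitzWith.of_dist_le_mul fun x y => ?_
    have hc : ((1/2 : NNReal) : ℝ) = 1/2 := by norm_num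
    rw [Subtype.dist_eq, Subtype.dist_eq x y, dist_eq_norm, dist_eq_norm, hc]
    exact keycontr x.1 y.1 x.2 y.2
  have hcontr : ContractingWith (1/2 : NNReal) f :=
    ⟨by rw [← NNReal.coe_lt_coe]; norm_num, hL⟩
  set Wf := ContractingWith.fixedPoint f hcontr with hWf
  have hfixed : f Wf = Wf := ContractingWith.fixedPoint_isFixedPt hcontr
  set W : Matrix (Fin N) (Fin N) ℂ := Wf.1 with hWdef
  have hWr : ‖W‖ ≤ r := Wf.2
  have hfix : Φ W = W := congrArg Subtype.val hfixed
  have hdiagW : ∀ k, W k k = 0 := by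
    intro k
    have h1 := congrFun (congrFun hfix k) k
    simpa [hΦ] using h1.symm
  have hoffW : ∀ k l, k ≠ l → W k l * (lam W l - D0 k) = A W k l := by
    intro k l hkl
    have h1 := congrFun (congrFun hfix k) l
    have h2 : A W k l / (lam W l - D0 k) = W k l := by
      simpa [hΦ, Matrix.of_apply, if_neg hkl] using h1
    have hne0 : lam W l - D0 k ≠ 0 := by
      intro h0
      have := keyden W hWr k l hkl
      rw [h0, norm_zero] at this; linarith
    calc W k l * (lam W l - D0 k)
        = (A W k l / (lam W l - D0 k)) * (lam W l - D0 k) := by rw [h2]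
      _ = A W k l := div_mul_cancel₀ _ hne0
  refine ⟨W, lam W, hWr, ?_, ?_⟩
  · ext k l
    have hone : (1 + W) k l = (1 : Matrix (Fin N) (Fin N) ℂ) k l + W k l := rfl
    have hLHS : ((Matrix.diagonal D0 + E) * (1 + W)) k l
        = D0 k * ((1 : Matrix (Fin N) (Fin N) ℂ) k l + W k l) + A W k l := by
      rw [Matrix.add_mul, Matrix.add_apply, Matrix.diagonal_mul, hone]
    have hRHS : ((1 + W) * Matrix.diagonal (lam W)) k l
        = ((1 : Matrix (Fin N) (Fin N) ℂ) k l + W k l) * lam W l := by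
      rw [Matrix.mul_diagonal, hone]
    rw [hLHS, hRHS]
    rcases eq_or_ne k l with rfl | hkl
    · rw [Matrix.one_apply_eq, hdiagW k]
      have hlamk : lam W k = D0 k + A W k k := rfl
      rw [hlamk]; ring
    · rw [Matrix.one_apply_ne hkl]
      linear_combination - hoffW k l hkl
  · intro k
    have hlamk : lam W k - D0 k = A W k k := by
      have : lam W k = D0 k + A W k k := rfl
      rw [this]; ring
    rw [hlamk]
    exact le_trans (matEntry_le _ k k) (keyA W hWr)

lemma conj_norm_eq (A : Matrix (Fin N) (Fin N) ℂ) : ‖A.map (starRingEnd ℂ)‖ = ‖A‖ := by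
  refine le_antisymm (matNorm_le (norm_nonneg _) fun i j => ?_)
    (matNorm_le (norm_nonneg _) fun i j => ?_)
  · simpa [Matrix.map_apply] using matEntry_le A i j
  · calc ‖A i j‖ = ‖(A.map (starRingEnd ℂ)) i j‖ := by simp [Matrix.map_apply]
      _ ≤ ‖A.map (starRingEnd ℂ)‖ := matEntry_le _ i j

set_option maxHeartbeats 1000000 in
/-- Per-`h` master lemma: a reversible matrix close to a unimodular diagonal matrix with
separated diagonal entries has unimodular spectrum and uniformly bounded powers close to
diagonal powers. -/
lemma perh (hN1 : (1:ℝ) ≤ N) (D0 : Fin N → ℂ) (M E : Matrix (Fin N) (Fin N) ℂ)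
    (hME : M = Matrix.diagonal D0 + E) (hD0 : ∀ k, ‖D0 k‖ = 1)
    {δh β : ℝ} (hβ0 : 0 ≤ β) (hδ : 0 < δh)
    (hgap : ∀ k l : Fin N, k ≠ l → δh ≤ ‖D0 k - D0 l‖) (hE : ‖E‖ ≤ β)
    (hsmall : 64 * (N:ℝ)^3 * β ≤ δh) (hβN : (N:ℝ) * β ≤ 1/2)
    (hrevM : IsUnit M.det → M.map (starRingEnd ℂ) = M⁻¹) :
    ∃ Λ : Fin N → ℂ, (∀ k, ‖Λ k‖ = 1) ∧
      ∀ n : ℕ, ‖M^n - Matrix.diagonal (fun k => Λ k ^ n)‖ ≤ 32*(N:ℝ)^2*β/δh := by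
  have hN0 : (0:ℝ) < N := lt_of_lt_of_le zero_lt_one hN1
  obtain ⟨W, Λ, hWr, hdiagz, hΛclose⟩ := core hN1 D0 E hβ0 hδ hgap hE hsmall
  rw [← hME] at hdiagz
  set r : ℝ := 8*(N:ℝ)*β/δh with hr
  have hr0 : 0 ≤ r := by positivity
  have hNr : (N:ℝ) * r ≤ 1/8 := by
    rw [hr, show (N:ℝ) * (8*(N:ℝ)*β/δh) = 8*(N:ℝ)^2*β/δh by ring, div_le_iff₀ hδ]
    nlinarith [mul_le_mul_of_nonneg_right hN1 (mul_nonneg (mul_nonneg (by norm_num : (0:ℝ) ≤ 64) (sq_nonneg (N:ℝ))) hβ0)]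
  have hNW : (N:ℝ) * ‖W‖ ≤ 1/8 :=
    le_trans (mul_le_mul_of_nonneg_left hWr (le_of_lt hN0)) hNr
  have hNW2 : (N:ℝ) * ‖W‖ ≤ 1/2 := le_trans hNW (by norm_num)
  obtain ⟨hWunit, hWinvnorm, hWinvsub⟩ := inv_one_add_bounds hNW2
  -- M is invertible
  have hD0ne : ∀ k, D0 k ≠ 0 := fun k h0 => by
    have := hD0 k; rw [h0, norm_zero] at this; norm_num at this
  have hMunit : IsUnit M.det := by
    have hfac : M = Matrix.diagonal D0 *
        (1 + Matrix.diagonal (fun k => (D0 k)⁻¹) * E) := by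
      rw [hME, mul_add, mul_one, ← Matrix.mul_assoc, Matrix.diagonal_mul_diagonal]
      have h1 : (fun k => D0 k * (D0 k)⁻¹) = fun _ : Fin N => (1:ℂ) :=
        funext fun k => mul_inv_cancel₀ (hD0ne k)
      rw [h1, Matrix.diagonal_one, one_mul]
    rw [hfac, Matrix.det_mul]
    refine IsUnit.mul ?_ ?_
    · rw [Matrix.det_diagonal]
      exact isUnit_iff_ne_zero.2 (Finset.prod_ne_zero_iff.2 fun k _ => hD0ne k)
    · refine isUnit_one_add ?_
      have h1 : ‖Matrix.diagonal (fun k => (D0 k)⁻¹) * E‖ ≤ ‖E‖ :=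
        diagMul_norm_le _ (fun k => by rw [norm_inv, hD0 k]; norm_num) E
      have : (N:ℝ) * ‖Matrix.diagonal (fun k => (D0 k)⁻¹) * E‖ ≤ (N:ℝ) * β :=
        mul_le_mul_of_nonneg_left (le_trans h1 hE) (le_of_lt hN0)
      linarith
  have hrev := hrevM hMunit
  -- unimodularity of Λ
  have hMW : M = (1 + W) * Matrix.diagonal Λ * (1 + W)⁻¹ := by
    rw [← hdiagz, Matrix.mul_assoc, Matrix.mul_nonsing_inv _ hWunit, mul_one]
  have hMinvW : (1 + W)⁻¹ * M = Matrix.diagonal Λ * (1 + W)⁻¹ := by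
    rw [hMW, ← Matrix.mul_assoc, ← Matrix.mul_assoc, Matrix.nonsing_inv_mul _ hWunit, one_mul]
  set Wc := W.map (starRingEnd ℂ) with hWc
  set Λc : Fin N → ℂ := fun k => (starRingEnd ℂ) (Λ k) with hΛc
  have hmap1W : (1 + W).map (starRingEnd ℂ) = 1 + Wc := by
    ext i j
    simp [Matrix.map_apply, Matrix.add_apply, Matrix.one_apply, apply_ite (starRingEnd ℂ), hWc]
  have hconj : M⁻¹ * (1 + Wc) = (1 + Wc) * Matrix.diagonal Λc := by
    have hmm := congrArg (Matrix.map · (starRingEnd ℂ)) hdiagz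
    simp only [Matrix.map_mul, Matrix.diagonal_map (map_zero _)] at hmm
    rw [hrev, hmap1W] at hmm
    exact hmm
  have hG : (1 + Wc) = M * ((1 + Wc) * Matrix.diagonal Λc) := by
    rw [← hconj, ← Matrix.mul_assoc, Matrix.mul_nonsing_inv _ hMunit, one_mul]
  set G := (1 + W)⁻¹ * (1 + Wc) with hGdef
  have hGid : G = Matrix.diagonal Λ * G * Matrix.diagonal Λc := by
    calc G = (1 + W)⁻¹ * (M * ((1 + Wc) * Matrix.diagonal Λc)) := by rw [hGdef, ← hG]
      _ = ((1 + W)⁻¹ * M) * (1 + Wc) * Matrix.diagonal Λc := by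
          rw [Matrix.mul_assoc, Matrix.mul_assoc]
      _ = (Matrix.diagonal Λ * (1 + W)⁻¹) * (1 + Wc) * Matrix.diagonal Λc := by rw [hMinvW]
      _ = Matrix.diagonal Λ * G * Matrix.diagonal Λc := by
          rw [hGdef, Matrix.mul_assoc (Matrix.diagonal Λ)]
  have hGnear : ‖G - 1‖ ≤ 4 * ((N:ℝ) * ‖W‖) := by
    have h0 : (1 + Wc) - (1 + W) = Wc - W := by abel
    have h1 : G - 1 = (1 + W)⁻¹ * (Wc - W) := by
      calc G - 1 = (1 + W)⁻¹ * (1 + Wc) - (1 + W)⁻¹ * (1 + W) := by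
            rw [hGdef, Matrix.nonsing_inv_mul _ hWunit]
        _ = (1 + W)⁻¹ * ((1 + Wc) - (1 + W)) := (mul_sub _ _ _).symm
        _ = (1 + W)⁻¹ * (Wc - W) := by rw [h0]
    rw [h1]
    have h2 : ‖Wc - W‖ ≤ 2 * ‖W‖ := by
      calc ‖Wc - W‖ ≤ ‖Wc‖ + ‖W‖ := norm_sub_le _ _
        _ = 2 * ‖W‖ := by rw [hWc, conj_norm_eq]; ring
    calc ‖(1 + W)⁻¹ * (Wc - W)‖ ≤ N * (‖(1 + W)⁻¹‖ * ‖Wc - W‖) := matMul_norm_le _ _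
      _ ≤ N * (2 * (2 * ‖W‖)) := by
          refine mul_le_mul_of_nonneg_left ?_ (le_of_lt hN0)
          exact mul_le_mul hWinvnorm h2 (norm_nonneg _) (by norm_num)
      _ = 4 * ((N:ℝ) * ‖W‖) := by ring
  have hΛmod : ∀ k, ‖Λ k‖ = 1 := by
    intro k
    have hent : G k k = Λ k * G k k * Λc k := by
      conv_lhs => rw [hGid]
      rw [Matrix.mul_diagonal, Matrix.diagonal_mul]
    have hGkk : G k k ≠ 0 := by
      intro h0
      have h1 : ‖(G - 1) k k‖ ≤ 4 * ((N:ℝ) * ‖W‖) := le_trans (matEntry_le _ k k) hGnear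
      have h2 : (G - 1) k k = G k k - 1 := by
        simp [Matrix.sub_apply, Matrix.one_apply_eq]
      rw [h2, h0] at h1
      simp only [zero_sub, norm_neg, norm_one] at h1
      linarith
    have h3 : G k k * (1 - Λ k * Λc k) = 0 := by linear_combination hent
    have h4 : Λ k * Λc k = 1 := by
      rcases mul_eq_zero.mp h3 with h | h
      · exact absurd h hGkk
      · linear_combination -h
    have h5 : Complex.normSq (Λ k) = 1 := by
      have hmc := Complex.mul_conj (Λ k)
      rw [hΛc] at h4
      rw [h4] at hmc
      exact_mod_cast hmc.symm
    have h6 : ‖Λ k‖^2 = 1 := by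
      rw [Complex.sq_norm]
      exact h5
    nlinarith [norm_nonneg (Λ k)]
  -- power bound
  have hpow : ∀ n : ℕ, M^n = (1 + W) * (Matrix.diagonal Λ)^n * (1 + W)⁻¹ := by
    intro n
    induction n with
    | zero => simp [Matrix.mul_nonsing_inv _ hWunit]
    | succ n ih =>
        calc M^(n+1) = M^n * M := pow_succ M n
          _ = ((1 + W) * (Matrix.diagonal Λ)^n * (1 + W)⁻¹)
              * ((1 + W) * Matrix.diagonal Λ * (1 + W)⁻¹) := by rw [ih, ← hMW]
          _ = (1 + W) * ((Matrix.diagonal Λ)^n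
              * ((1 + W)⁻¹ * ((1 + W) * (Matrix.diagonal Λ * (1 + W)⁻¹)))) := by
              simp only [Matrix.mul_assoc]
          _ = (1 + W) * (Matrix.diagonal Λ)^(n+1) * (1 + W)⁻¹ := by
              rw [Matrix.nonsing_inv_mul_cancel_left _ _ hWunit, pow_succ]
              simp only [Matrix.mul_assoc]
  refine ⟨Λ, hΛmod, fun n => ?_⟩
  have hΛn : ∀ k, ‖(Λ^n) k‖ ≤ 1 := by
    intro k
    rw [Pi.pow_apply, norm_pow, hΛmod k, one_pow]
  have hdiagn : (Matrix.diagonal Λ)^n = Matrix.diagonal (Λ^n) := Matrix.diagonal_pow Λ n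
  have hdiagn' : Matrix.diagonal (fun k => Λ k ^ n) = Matrix.diagonal (Λ^n) := rfl
  have hsplit : M^n - Matrix.diagonal (Λ^n)
      = W * (Matrix.diagonal (Λ^n) * (1 + W)⁻¹)
        + Matrix.diagonal (Λ^n) * ((1 + W)⁻¹ - 1) := by
    rw [hpow n, hdiagn]
    noncomm_ring
  rw [hdiagn', hsplit]
  have hb1 : ‖W * (Matrix.diagonal (Λ^n) * (1 + W)⁻¹)‖ ≤ (N:ℝ) * (‖W‖ * 2) := by
    refine le_trans (matMul_norm_le _ _) ?_
    refine mul_le_mul_of_nonneg_left ?_ (le_of_lt hN0)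
    exact mul_le_mul_of_nonneg_left (le_trans (diagMul_norm_le _ hΛn _) hWinvnorm) (norm_nonneg _)
  have hb2 : ‖Matrix.diagonal (Λ^n) * ((1 + W)⁻¹ - 1)‖ ≤ 2 * ((N:ℝ) * ‖W‖) :=
    le_trans (diagMul_norm_le _ hΛn _) hWinvsub
  have htot : ‖W * (Matrix.diagonal (Λ^n) * (1 + W)⁻¹)
        + Matrix.diagonal (Λ^n) * ((1 + W)⁻¹ - 1)‖ ≤ 4 * ((N:ℝ) * ‖W‖) := by
    refine le_trans (norm_add_le _ _) ?_
    linarith [hb1, hb2]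
  refine le_trans htot ?_
  have hlast : (N:ℝ) * ‖W‖ ≤ (N:ℝ) * r := mul_le_mul_of_nonneg_left hWr (le_of_lt hN0)
  calc 4 * ((N:ℝ) * ‖W‖) ≤ 4 * ((N:ℝ) * r) := by linarith
    _ = 32*(N:ℝ)^2*β/δh := by rw [hr]; field_simp; ring

lemma euclNorm_nonneg (v : Fin N → ℂ) : 0 ≤ euclNorm v := norm_nonneg _

lemma euclNorm_smul (c : ℂ) (v : Fin N → ℂ) : euclNorm (c • v) = ‖c‖ * euclNorm v := by
  unfold euclNorm
  rw [show (WithLp.equiv 2 (Fin N → ℂ)).symm (c • v)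
      = c • (WithLp.equiv 2 (Fin N → ℂ)).symm v from rfl, norm_smul]

lemma euclNorm_eq (v : Fin N → ℂ) : euclNorm v = Real.sqrt (∑ i, ‖v i‖^2) :=
  EuclideanSpace.norm_eq ((WithLp.equiv 2 (Fin N → ℂ)).symm v)

lemma euclNorm_coord (v : Fin N → ℂ) (i : Fin N) : ‖v i‖ ≤ euclNorm v := by
  rw [euclNorm_eq]
  have h1 : ‖v i‖ = Real.sqrt (‖v i‖^2) := (Real.sqrt_sq (norm_nonneg _)).symm
  rw [h1]
  refine Real.sqrt_le_sqrt ?_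
  exact Finset.single_le_sum (fun k _ => sq_nonneg ‖v k‖) (Finset.mem_univ i)

lemma supNorm_le_euclNorm (v : Fin N → ℂ) : ‖v‖ ≤ euclNorm v :=
  (pi_norm_le_iff_of_nonneg (euclNorm_nonneg v)).2 fun i => euclNorm_coord v i

lemma euclNorm_le_sum (v : Fin N → ℂ) : euclNorm v ≤ ∑ i, ‖v i‖ := by
  rw [euclNorm_eq]
  have h1 : ∑ i, ‖v i‖^2 ≤ (∑ i, ‖v i‖)^2 :=
    Finset.sum_sq_le_sq_sum_of_nonneg (fun i _ => norm_nonneg _)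
  refine le_trans (Real.sqrt_le_sqrt h1) (le_of_eq ?_)
  exact Real.sqrt_sq (Finset.sum_nonneg fun i _ => norm_nonneg _)

lemma exists_gaps (d : Fin N → ℝ) (hd : Function.Injective d) :
    ∃ δ > (0:ℝ), ∃ Δ > (0:ℝ), ∀ k l : Fin N, k ≠ l →
      δ ≤ |d k - d l| ∧ |d k - d l| ≤ Δ := by
  classical
  set s := (Finset.univ.filter (fun kl : Fin N × Fin N => kl.1 ≠ kl.2)).image
    (fun kl => |d kl.1 - d kl.2|) with hs
  by_cases hne : s.Nonempty
  · have hmem : ∀ k l : Fin N, k ≠ l → |d k - d l| ∈ s := by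
      intro k l hkl
      refine Finset.mem_image.2 ⟨(k, l), ?_, rfl⟩
      simp [hkl]
    have hminpos : 0 < s.min' hne := by
      obtain ⟨kl, hkl, hval⟩ := Finset.mem_image.1 (s.min'_mem hne)
      have hne' : kl.1 ≠ kl.2 := (Finset.mem_filter.1 hkl).2
      rw [← hval]
      exact abs_pos.2 (sub_ne_zero.2 fun hdd => hne' (hd hdd))
    refine ⟨s.min' hne, hminpos, s.max' hne, lt_of_lt_of_le hminpos (s.min'_le _ (s.max'_mem hne)), ?_⟩
    intro k l hkl
    exact ⟨s.min'_le _ (hmem k l hkl), s.le_max' _ (hmem k l hkl)⟩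
  · refine ⟨1, one_pos, 1, one_pos, fun k l hkl => absurd ?_ hne⟩
    exact ⟨|d k - d l|, Finset.mem_image.2 ⟨(k, l), by simp [hkl], rfl⟩⟩

lemma conj_pow_mat (U A : Matrix (Fin N) (Fin N) ℂ) (hU : IsUnit U.det) (n : ℕ) :
    (U * A * U⁻¹)^n = U * A^n * U⁻¹ := by
  induction n with
  | zero => simp [Matrix.mul_nonsing_inv _ hU]
  | succ n ih =>
      calc (U * A * U⁻¹)^(n+1) = (U * A * U⁻¹)^n * (U * A * U⁻¹) := pow_succ _ n
        _ = (U * A^n * U⁻¹) * (U * A * U⁻¹) := by rw [ih]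
        _ = U * (A^n * (U⁻¹ * (U * (A * U⁻¹)))) := by simp only [Matrix.mul_assoc]
        _ = U * A^(n+1) * U⁻¹ := by
            rw [Matrix.nonsing_inv_mul_cancel_left _ _ hU, pow_succ]
            simp only [Matrix.mul_assoc]

lemma diag_indicator_mulVec (j : Fin N) (w : Fin N → ℂ) :
    (Matrix.diagonal (fun k => if k = j then (1:ℂ) else 0)).mulVec w
      = w j • (Pi.single j 1 : Fin N → ℂ) := by
  ext k
  rw [Matrix.mulVec_diagonal]
  rcases eq_or_ne k j with rfl | hkj
  · simp
  · simp [hkj, Pi.single_apply]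

lemma map_ofReal_inv (Q : Matrix (Fin N) (Fin N) ℝ) (hQ : IsUnit Q.det) :
    (Q.map Complex.ofReal)⁻¹ = Q⁻¹.map Complex.ofReal := by
  have h1 : Q.map Complex.ofReal * (Q⁻¹).map Complex.ofReal = 1 := by
    have : Q.map (Complex.ofRealHom : ℝ →+* ℂ) * (Q⁻¹).map (Complex.ofRealHom : ℝ →+* ℂ) = 1 := by
      rw [← Matrix.map_mul, Matrix.mul_nonsing_inv _ hQ,
        Matrix.map_one _ (map_zero _) (map_one _)]
    exact this
  exact Matrix.inv_eq_right_inv h1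

lemma isUnit_map_ofReal (Q : Matrix (Fin N) (Fin N) ℝ) (hQ : IsUnit Q.det) :
    IsUnit (Q.map Complex.ofReal).det := by
  have h1 := (Complex.ofRealHom : ℝ →+* ℂ).map_det Q
  rw [RingHom.mapMatrix_apply] at h1
  have h2 : (Q.map Complex.ofReal).det = Complex.ofRealHom Q.det := h1.symm
  rw [h2]
  exact isUnit_iff_ne_zero.2 (by
    simp only [Complex.ofRealHom_eq_coe, ne_eq, Complex.ofReal_eq_zero]
    exact fun h0 => (isUnit_iff_ne_zero.1 hQ) h0)

lemma exp_similar (Q : Matrix (Fin N) (Fin N) ℝ) (hQ : IsUnit Q.det) (d : Fin N → ℝ) (h : ℝ) :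
    NormedSpace.exp (((h:ℂ) * Complex.I) • (Q * Matrix.diagonal d * Q⁻¹).map Complex.ofReal)
      = (Q.map Complex.ofReal)
        * Matrix.diagonal (fun k => Complex.exp (((h * d k : ℝ):ℂ) * Complex.I))
        * (Q.map Complex.ofReal)⁻¹ := by
  set Qc := Q.map Complex.ofReal with hQc
  set dc : Fin N → ℂ := fun k => (d k : ℂ) with hdc
  have hQcu : IsUnit Qc := (Matrix.isUnit_iff_isUnit_det _).2 (isUnit_map_ofReal Q hQ)
  have h1 : (Q * Matrix.diagonal d * Q⁻¹).map Complex.ofReal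
      = Qc * Matrix.diagonal dc * Qc⁻¹ := by
    have : (Q * Matrix.diagonal d * Q⁻¹).map (Complex.ofRealHom : ℝ →+* ℂ)
        = Q.map (Complex.ofRealHom : ℝ →+* ℂ)
          * (Matrix.diagonal d).map (Complex.ofRealHom : ℝ →+* ℂ)
          * (Q⁻¹).map (Complex.ofRealHom : ℝ →+* ℂ) := by
      rw [Matrix.map_mul, Matrix.map_mul]
    rw [hQc, map_ofReal_inv Q hQ]
    rw [show (Q * Matrix.diagonal d * Q⁻¹).map Complex.ofReal
        = (Q * Matrix.diagonal d * Q⁻¹).map (Complex.ofRealHom : ℝ →+* ℂ) from rfl, this]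
    congr 1
    · congr 1
      exact Matrix.diagonal_map (map_zero _)
  have h2 : ((h:ℂ) * Complex.I) • (Qc * Matrix.diagonal dc * Qc⁻¹)
      = Qc * (((h:ℂ) * Complex.I) • Matrix.diagonal dc) * Qc⁻¹ := by
    rw [mul_smul_comm, smul_mul_assoc]
  have h3 : ((h:ℂ) * Complex.I) • Matrix.diagonal dc
      = Matrix.diagonal (fun k => ((h:ℂ) * Complex.I) * dc k) := by
    rw [← Matrix.diagonal_smul]
    rfl
  rw [h1, h2, h3, Matrix.exp_conj Qc _ hQcu, Matrix.exp_diagonal]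
  have harg : (NormedSpace.exp fun k => ((h:ℂ) * Complex.I) * dc k)
      = fun k => Complex.exp (((h * d k : ℝ):ℂ) * Complex.I) := by
    funext k
    rw [Pi.coe_exp, ← Complex.exp_eq_exp_ℂ]
    congr 1
    rw [hdc]
    push_cast
    ring
  rw [harg]

lemma spectralProj_eq (Q : Matrix (Fin N) (Fin N) ℝ) (hQ : IsUnit Q.det) (j : Fin N) :
    spectralProj Q j = (Q.map Complex.ofReal)
      * Matrix.diagonal (fun k => if k = j then (1:ℂ) else 0) * (Q.map Complex.ofReal)⁻¹ := by
  unfold spectralProj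
  have h1 : (Q * Matrix.diagonal (fun k => if k = j then (1:ℝ) else 0) * Q⁻¹).map
      (Complex.ofRealHom : ℝ →+* ℂ)
      = Q.map (Complex.ofRealHom : ℝ →+* ℂ)
        * (Matrix.diagonal (fun k => if k = j then (1:ℝ) else 0)).map
            (Complex.ofRealHom : ℝ →+* ℂ)
        * (Q⁻¹).map (Complex.ofRealHom : ℝ →+* ℂ) := by
    rw [Matrix.map_mul, Matrix.map_mul]
  rw [show (Q * Matrix.diagonal (fun k => if k = j then (1:ℝ) else 0) * Q⁻¹).map Complex.ofReal
      = (Q * Matrix.diagonal (fun k => if k = j then (1:ℝ) else 0) * Q⁻¹).map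
          (Complex.ofRealHom : ℝ →+* ℂ) from rfl, h1, map_ofReal_inv Q hQ]
  congr 1
  congr 1
  rw [Matrix.diagonal_map (map_zero _)]
  congr 1
  funext k
  by_cases hk : k = j <;> simp [hk]

set_option maxHeartbeats 2000000 in
/-- Corollary 1, first part.  Under the hypotheses of Theorem 1 (real matrix
`H` with real simple eigenvalues, smooth reversible family `S h` consistent with `exp (i h H)`
at order `p ≥ 1`), there is `C > 0` such that for `|h|` small enough, for all `u ∈ ℂ^N`, all
eigenvalues `ω = d j` of `H` and all `n ≥ 0`,
`| |Π_ω (S h)^n u| - |Π_ω u| | ≤ C |h|^p |u|`. -/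
theorem stmt_1 {N : ℕ} (H : Matrix (Fin N) (Fin N) ℝ)
    (d : Fin N → ℝ) (Q : Matrix (Fin N) (Fin N) ℝ)
    (hQ : IsUnit Q.det) (hdiag : H = Q * Matrix.diagonal d * Q⁻¹)
    (hsimple : Function.Injective d)
    (S : ℝ → Matrix (Fin N) (Fin N) ℂ)
    (hsmooth : ContDiff ℝ (⊤ : ℕ∞) S)
    (hrev : ∀ h : ℝ, IsUnit (S h).det → (S h).map (starRingEnd ℂ) = (S h)⁻¹)
    (p : ℕ) (hp : 1 ≤ p)
    (hconsist :
      (fun h : ℝ => S h - NormedSpace.exp (((h : ℂ) * Complex.I) • H.map Complex.ofReal))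
        =O[nhds 0] fun h : ℝ => h ^ (p + 1)) :
    ∃ C > (0 : ℝ), ∀ᶠ h : ℝ in nhds 0, ∀ u : Fin N → ℂ, ∀ j : Fin N, ∀ n : ℕ,
      |euclNorm ((spectralProj Q j).mulVec ((S h ^ n).mulVec u))
          - euclNorm ((spectralProj Q j).mulVec u)|
        ≤ C * |h| ^ p * euclNorm u := by
  classical
  rcases Nat.eq_zero_or_pos N with hN0 | hNpos
  · subst hN0
    exact ⟨1, one_pos, Filter.Eventually.of_forall fun h u j n => j.elim0⟩
  have hN1 : (1:ℝ) ≤ N := by exact_mod_cast hNpos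
  have hN0' : (0:ℝ) < N := lt_of_lt_of_le zero_lt_one hN1
  set Qc : Matrix (Fin N) (Fin N) ℂ := Q.map Complex.ofReal with hQcdef
  have hQcd : IsUnit Qc.det := isUnit_map_ofReal Q hQ
  have hQcu : IsUnit Qc := (Matrix.isUnit_iff_isUnit_det _).2 hQcd
  have hQinvd : IsUnit (Qc⁻¹).det := Matrix.isUnit_nonsing_inv_det Qc hQcd
  obtain ⟨δ, hδpos, Δ, hΔpos, hgaps⟩ := exists_gaps d hsimple
  set cQ : ℝ := ‖Qc‖ with hcQ
  set cQi : ℝ := ‖Qc⁻¹‖ with hcQi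
  have hcQ0 : 0 ≤ cQ := norm_nonneg _
  have hcQi0 : 0 ≤ cQi := norm_nonneg _
  obtain ⟨c, hc⟩ := hconsist.bound
  set c' : ℝ := max c 0 with hc'
  have hc'0 : 0 ≤ c' := le_max_right _ _
  have hev : ∀ᶠ h : ℝ in nhds 0,
      ‖S h - NormedSpace.exp (((h : ℂ) * Complex.I) • H.map Complex.ofReal)‖
        ≤ c' * |h|^(p+1) := by
    filter_upwards [hc] with h hh
    refine le_trans hh ?_
    rw [norm_pow, Real.norm_eq_abs]
    exact mul_le_mul_of_nonneg_right (le_max_left _ _) (by positivity)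
  set K2 : ℝ := (N:ℝ)*(cQi*((N:ℝ)*(c'*cQ))) + 1 with hK2
  have hK2pos : 0 < K2 := by positivity
  set K3 : ℝ := 64*(N:ℝ)^2*K2/δ with hK3
  have hK3pos : 0 < K3 := by positivity
  set C : ℝ := (N:ℝ)^4*cQ*cQi*K3 + 1 with hC
  have hCpos : 0 < C := by positivity
  set ε : ℝ := min (1/(Δ+1)) (min (δ/(2*(64*(N:ℝ)^3*K2 + 1))) (min (1/(2*((N:ℝ)*K2+1))) 1))
    with hε
  have hεpos : 0 < ε := by
    refine lt_min (by positivity) (lt_min (by positivity) (lt_min (by positivity) one_pos))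
  refine ⟨C, hCpos, ?_⟩
  have hball : ∀ᶠ h : ℝ in nhds 0, |h| < ε := by
    filter_upwards [Metric.ball_mem_nhds (0:ℝ) hεpos] with h hh
    simpa [Real.dist_eq] using hh
  filter_upwards [hev, hball] with h hevh hballh
  intro u j n
  -- basic smallness facts about h
  have habs1 : |h| ≤ 1 := le_of_lt (lt_of_lt_of_le hballh (le_trans (min_le_right _ _)
    (le_trans (min_le_right _ _) (min_le_right _ _))))
  have habsΔ : |h| * Δ ≤ 1 := by
    have h1 : |h| < 1/(Δ+1) := lt_of_lt_of_le hballh (min_le_left _ _)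
    rw [lt_div_iff₀ (by positivity)] at h1
    nlinarith [abs_nonneg h]
  have habsδ : |h| * (64*(N:ℝ)^3*K2) ≤ δ/2 := by
    have h1 : |h| < δ/(2*(64*(N:ℝ)^3*K2 + 1)) :=
      lt_of_lt_of_le hballh (le_trans (min_le_right _ _) (min_le_left _ _))
    rw [lt_div_iff₀ (by positivity)] at h1
    nlinarith [abs_nonneg h, hK2pos]
  have habsN : |h| * ((N:ℝ)*K2) ≤ 1/2 := by
    have h1 : |h| < 1/(2*((N:ℝ)*K2+1)) := lt_of_lt_of_le hballh
      (le_trans (min_le_right _ _) (le_trans (min_le_right _ _) (min_le_left _ _)))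
    rw [lt_div_iff₀ (by positivity)] at h1
    nlinarith [abs_nonneg h, hK2pos]
  -- the exponential reference
  have hexpT : NormedSpace.exp (((h : ℂ) * Complex.I) • H.map Complex.ofReal)
      = Qc * Matrix.diagonal (fun k => Complex.exp (((h * d k : ℝ):ℂ) * Complex.I)) * Qc⁻¹ := by
    rw [hdiag]
    exact exp_similar Q hQ d h
  set D0 : Fin N → ℂ := fun k => Complex.exp (((h * d k : ℝ):ℂ) * Complex.I) with hD0def
  rcases eq_or_ne h 0 with rfl | hne
  · -- h = 0 : S 0 = 1 and both sides vanish
    have hT1 : NormedSpace.exp ((((0:ℝ) : ℂ) * Complex.I) •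
        H.map Complex.ofReal) = 1 := by
      rw [show (((0:ℝ):ℂ) * Complex.I) = 0 by simp, zero_smul]
      exact NormedSpace.exp_zero
    have hS1 : S 0 = 1 := by
      have h1 := hevh
      rw [hT1] at h1
      have h2 : c' * |(0:ℝ)|^(p+1) = 0 := by simp
      rw [h2] at h1
      have h3 : S 0 - 1 = 0 := norm_le_zero_iff.1 h1
      have := sub_eq_zero.1 h3
      exact this
    rw [hS1, one_pow, Matrix.one_mulVec, sub_self, abs_zero,
      zero_pow (Nat.one_le_iff_ne_zero.mp hp), mul_zero, zero_mul]
  -- main case h ≠ 0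
  have habs0 : 0 < |h| := abs_pos.2 hne
  set M : Matrix (Fin N) (Fin N) ℂ := Qc⁻¹ * S h * Qc with hM
  set E : Matrix (Fin N) (Fin N) ℂ := M - Matrix.diagonal D0 with hEdef
  have hME : M = Matrix.diagonal D0 + E := by rw [hEdef]; abel
  have hMS : Qc * M * Qc⁻¹ = S h := by
    rw [hM]
    calc Qc * (Qc⁻¹ * S h * Qc) * Qc⁻¹
        = (Qc * (Qc⁻¹ * (S h * Qc))) * Qc⁻¹ := by simp only [Matrix.mul_assoc]
      _ = (S h * Qc) * Qc⁻¹ := by rw [Matrix.mul_nonsing_inv_cancel_left _ _ hQcd]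
      _ = S h := Matrix.mul_nonsing_inv_cancel_right _ _ hQcd
  have hT : Qc⁻¹ * (Qc * Matrix.diagonal D0 * Qc⁻¹) * Qc = Matrix.diagonal D0 := by
    calc Qc⁻¹ * (Qc * Matrix.diagonal D0 * Qc⁻¹) * Qc
        = (Qc⁻¹ * (Qc * (Matrix.diagonal D0 * Qc⁻¹))) * Qc := by simp only [Matrix.mul_assoc]
      _ = (Matrix.diagonal D0 * Qc⁻¹) * Qc := by
          rw [Matrix.nonsing_inv_mul_cancel_left _ _ hQcd]
      _ = Matrix.diagonal D0 := Matrix.nonsing_inv_mul_cancel_right _ _ hQcd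
  have hEeq : E = Qc⁻¹ * (S h - NormedSpace.exp (((h : ℂ) * Complex.I) •
      H.map Complex.ofReal)) * Qc := by
    rw [hEdef, hM, Matrix.mul_sub, Matrix.sub_mul, hexpT, hT]
  have hEnorm : ‖E‖ ≤ K2 * |h|^(p+1) := by
    rw [hEeq]
    set Sd := S h - NormedSpace.exp (((h : ℂ) * Complex.I) • H.map Complex.ofReal) with hSd
    calc ‖Qc⁻¹ * Sd * Qc‖ ≤ (N:ℝ) * (‖Qc⁻¹ * Sd‖ * cQ) := matMul_norm_le _ _
      _ ≤ (N:ℝ) * (((N:ℝ) * (cQi * (c' * |h|^(p+1)))) * cQ) := by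
          refine mul_le_mul_of_nonneg_left (mul_le_mul_of_nonneg_right ?_ hcQ0) hN0'.le
          refine le_trans (matMul_norm_le _ _) ?_
          exact mul_le_mul_of_nonneg_left
            (mul_le_mul_of_nonneg_left hevh hcQi0) hN0'.le
      _ = ((N:ℝ)*(cQi*((N:ℝ)*(c'*cQ)))) * |h|^(p+1) := by ring
      _ ≤ K2 * |h|^(p+1) := by
          refine mul_le_mul_of_nonneg_right ?_ (by positivity)
          rw [hK2]; linarith
  have hD0mod : ∀ k, ‖D0 k‖ = 1 := by
    intro k
    rw [hD0def]
    exact Complex.norm_exp_ofReal_mul_I _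
  have hδh : (0:ℝ) < δ * |h| / 2 := by positivity
  have hgapD : ∀ k l : Fin N, k ≠ l → δ * |h| / 2 ≤ ‖D0 k - D0 l‖ := by
    intro k l hkl
    obtain ⟨hlow, hhigh⟩ := hgaps k l hkl
    have habd : |h * d k - h * d l| = |h| * |d k - d l| := by
      rw [show h * d k - h * d l = h * (d k - d l) by ring, abs_mul]
    have hab1 : |h * d k - h * d l| ≤ 1 := by
      rw [habd]
      exact le_trans (mul_le_mul_of_nonneg_left hhigh (abs_nonneg h)) habsΔ
    have := gap_exp hab1
    refine le_trans ?_ this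
    rw [habd]
    have : δ * |h| ≤ |h| * |d k - d l| := by
      rw [mul_comm δ]
      exact mul_le_mul_of_nonneg_left hlow (abs_nonneg h)
    linarith
  have hppow : |h|^p ≤ |h| := by
    calc |h|^p ≤ |h|^1 := pow_le_pow_of_le_one (abs_nonneg h) habs1 hp
      _ = |h| := pow_one _
  have hppow1 : |h|^(p+1) ≤ |h| * |h| := by
    rw [pow_succ]
    exact mul_le_mul_of_nonneg_right hppow (abs_nonneg h)
  have hppow2 : |h|^(p+1) ≤ |h| := by
    calc |h|^(p+1) ≤ |h| * |h| := hppow1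
      _ ≤ 1 * |h| := mul_le_mul_of_nonneg_right habs1 (abs_nonneg h)
      _ = |h| := one_mul _
  have hsmallD : 64 * (N:ℝ)^3 * (K2 * |h|^(p+1)) ≤ δ * |h| / 2 := by
    calc 64 * (N:ℝ)^3 * (K2 * |h|^(p+1)) ≤ 64 * (N:ℝ)^3 * (K2 * (|h| * |h|)) := by
          refine mul_le_mul_of_nonneg_left (mul_le_mul_of_nonneg_left hppow1 hK2pos.le)
            (by positivity)
      _ = (|h| * (64*(N:ℝ)^3*K2)) * |h| := by ring
      _ ≤ (δ/2) * |h| := mul_le_mul_of_nonneg_right habsδ (abs_nonneg h)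
      _ = δ * |h| / 2 := by ring
  have hβND : (N:ℝ) * (K2 * |h|^(p+1)) ≤ 1/2 := by
    calc (N:ℝ) * (K2 * |h|^(p+1)) ≤ (N:ℝ) * (K2 * |h|) := by
          refine mul_le_mul_of_nonneg_left (mul_le_mul_of_nonneg_left hppow2 hK2pos.le) hN0'.le
      _ = |h| * ((N:ℝ) * K2) := by ring
      _ ≤ 1/2 := habsN
  have hrevM : IsUnit M.det → M.map (starRingEnd ℂ) = M⁻¹ := by
    intro hMdet
    have hSdet : IsUnit (S h).det := by
      rw [← hMS, Matrix.det_mul, Matrix.det_mul]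
      exact (hQcd.mul hMdet).mul hQinvd
    have hQcconj : Qc.map (starRingEnd ℂ) = Qc := by
      ext i k; simp [hQcdef, Matrix.map_apply, Complex.conj_ofReal]
    have hQciconj : (Qc⁻¹).map (starRingEnd ℂ) = Qc⁻¹ := by
      rw [hQcdef, map_ofReal_inv Q hQ]
      ext i k; simp [Matrix.map_apply, Complex.conj_ofReal]
    have h1 : M.map (starRingEnd ℂ) = Qc⁻¹ * (S h)⁻¹ * Qc := by
      rw [hM, Matrix.map_mul, Matrix.map_mul, hQcconj, hQciconj, hrev h hSdet]
    have h2 : M⁻¹ = Qc⁻¹ * (S h)⁻¹ * Qc := by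
      rw [hM, Matrix.mul_inv_rev, Matrix.mul_inv_rev,
        Matrix.nonsing_inv_nonsing_inv _ hQcd]
      simp only [Matrix.mul_assoc]
    rw [h1, h2]
  obtain ⟨Λ, hΛ1, hMn⟩ := perh hN1 D0 M E hME hD0mod (by positivity) hδh hgapD hEnorm
    hsmallD hβND hrevM
  have hMnb : ‖M^n - Matrix.diagonal (fun k => Λ k ^ n)‖ ≤ K3 * |h|^p := by
    refine le_trans (hMn n) (le_of_eq ?_)
    rw [hK3, pow_succ]
    field_simp
    ring
  -- vector computations
  set Ej : Matrix (Fin N) (Fin N) ℂ :=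
    Matrix.diagonal (fun k => if k = j then (1:ℂ) else 0) with hEj
  have hP : spectralProj Q j = Qc * Ej * Qc⁻¹ := spectralProj_eq Q hQ j
  set v : Fin N → ℂ := Qc⁻¹.mulVec u with hv
  set e : Fin N → ℂ := Qc.mulVec (Pi.single j 1) with he
  have hSn : (S h)^n = Qc * M^n * Qc⁻¹ := by
    rw [← hMS]
    exact conj_pow_mat Qc M hQcd n
  have hPu : (spectralProj Q j).mulVec u = v j • e := by
    rw [hP]
    calc (Qc * Ej * Qc⁻¹).mulVec u
        = (Qc * Ej).mulVec (Qc⁻¹.mulVec u) := (Matrix.mulVec_mulVec u (Qc * Ej) Qc⁻¹).symm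
      _ = Qc.mulVec (Ej.mulVec v) := by rw [← hv, ← Matrix.mulVec_mulVec]
      _ = Qc.mulVec (v j • (Pi.single j 1 : Fin N → ℂ)) := by
          rw [hEj, diag_indicator_mulVec]
      _ = v j • e := by rw [Matrix.mulVec_smul, he]
  have hPSu : (spectralProj Q j).mulVec ((S h ^ n).mulVec u)
      = ((M^n).mulVec v) j • e := by
    rw [hP, hSn]
    have hmat : (Qc * Ej * Qc⁻¹) * (Qc * M^n * Qc⁻¹) = Qc * Ej * M^n * Qc⁻¹ := by
      calc (Qc * Ej * Qc⁻¹) * (Qc * M^n * Qc⁻¹)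
          = Qc * (Ej * (Qc⁻¹ * (Qc * (M^n * Qc⁻¹)))) := by simp only [Matrix.mul_assoc]
        _ = Qc * (Ej * (M^n * Qc⁻¹)) := by rw [Matrix.nonsing_inv_mul_cancel_left _ _ hQcd]
        _ = Qc * Ej * M^n * Qc⁻¹ := by simp only [Matrix.mul_assoc]
    calc (Qc * Ej * Qc⁻¹).mulVec ((Qc * M^n * Qc⁻¹).mulVec u)
        = ((Qc * Ej * Qc⁻¹) * (Qc * M^n * Qc⁻¹)).mulVec u :=
          Matrix.mulVec_mulVec u _ _
      _ = (Qc * Ej * M^n * Qc⁻¹).mulVec u := by rw [hmat]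
      _ = (Qc * Ej * M^n).mulVec v := by rw [← Matrix.mulVec_mulVec, ← hv]
      _ = (Qc * Ej).mulVec ((M^n).mulVec v) := by rw [← Matrix.mulVec_mulVec]
      _ = Qc.mulVec (Ej.mulVec ((M^n).mulVec v)) := by rw [← Matrix.mulVec_mulVec]
      _ = Qc.mulVec ((((M^n).mulVec v) j) • (Pi.single j 1 : Fin N → ℂ)) := by
          rw [hEj, diag_indicator_mulVec]
      _ = ((M^n).mulVec v) j • e := by rw [Matrix.mulVec_smul, he]
  rw [hPSu, hPu, euclNorm_smul, euclNorm_smul, ← sub_mul, abs_mul,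
    abs_of_nonneg (euclNorm_nonneg e)]
  -- bound on euclNorm e
  have hsingle : ‖(Pi.single j 1 : Fin N → ℂ)‖ ≤ 1 := by
    refine (pi_norm_le_iff_of_nonneg zero_le_one).2 fun k => ?_
    rcases eq_or_ne k j with rfl | hkj
    · simp
    · simp [Pi.single_apply, hkj]
  have hcj : euclNorm e ≤ (N:ℝ)^2 * cQ := by
    refine le_trans (euclNorm_le_sum e) ?_
    have h1 : ∀ i, ‖e i‖ ≤ (N:ℝ) * cQ := by
      intro i
      refine le_trans (mulVec_entry_le Qc _ i) ?_
      refine mul_le_mul_of_nonneg_left ?_ hN0'.le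
      calc cQ * ‖(Pi.single j 1 : Fin N → ℂ)‖ ≤ cQ * 1 :=
            mul_le_mul_of_nonneg_left hsingle hcQ0
        _ = cQ := mul_one _
    calc ∑ i, ‖e i‖ ≤ ∑ _i : Fin N, (N:ℝ) * cQ := Finset.sum_le_sum fun i _ => h1 i
      _ = (N:ℝ) * ((N:ℝ) * cQ) := by simp [Finset.sum_const, nsmul_eq_mul]
      _ = (N:ℝ)^2 * cQ := by ring
  -- bound on the scalar difference
  have hvnorm : ‖v‖ ≤ (N:ℝ) * (cQi * euclNorm u) := by
    refine le_trans (mulVec_norm_le Qc⁻¹ u) ?_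
    exact mul_le_mul_of_nonneg_left
      (mul_le_mul_of_nonneg_left (supNorm_le_euclNorm u) hcQi0) hN0'.le
  have hΛnorm : ‖Λ j ^ n * v j‖ = ‖v j‖ := by
    rw [norm_mul, norm_pow, hΛ1 j, one_pow, one_mul]
  have hdiffj : ((M^n).mulVec v) j - Λ j ^ n * v j
      = ((M^n - Matrix.diagonal (fun k => Λ k ^ n)).mulVec v) j := by
    rw [Matrix.sub_mulVec]
    simp [Matrix.mulVec_diagonal]
  have hwv : |‖((M^n).mulVec v) j‖ - ‖v j‖|
      ≤ (N:ℝ) * ((K3 * |h|^p) * ((N:ℝ) * (cQi * euclNorm u))) := by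
    have h1 : |‖((M^n).mulVec v) j‖ - ‖v j‖| ≤ ‖((M^n).mulVec v) j - Λ j ^ n * v j‖ := by
      conv_lhs => rw [← hΛnorm]
      exact abs_norm_sub_norm_le _ _
    refine le_trans h1 ?_
    rw [hdiffj]
    refine le_trans (mulVec_entry_le _ v j) ?_
    refine mul_le_mul_of_nonneg_left ?_ hN0'.le
    exact mul_le_mul hMnb hvnorm (norm_nonneg _)
      (mul_nonneg hK3pos.le (pow_nonneg (abs_nonneg h) p))
  calc |‖((M^n).mulVec v) j‖ - ‖v j‖| * euclNorm e
      ≤ ((N:ℝ) * ((K3 * |h|^p) * ((N:ℝ) * (cQi * euclNorm u)))) * ((N:ℝ)^2 * cQ) :=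
        mul_le_mul hwv hcj (euclNorm_nonneg e)
          (mul_nonneg hN0'.le (mul_nonneg
            (mul_nonneg hK3pos.le (pow_nonneg (abs_nonneg h) p))
            (mul_nonneg hN0'.le (mul_nonneg hcQi0 (euclNorm_nonneg u)))))
    _ = ((N:ℝ)^4*cQ*cQi*K3) * |h|^p * euclNorm u := by ring
    _ ≤ C * |h|^p * euclNorm u := by
        have hAC : (N:ℝ)^4*cQ*cQi*K3 ≤ C := by rw [hC]; linarith
        have h2 : 0 ≤ |h|^p * euclNorm u :=
          mul_nonneg (pow_nonneg (abs_nonneg h) p) (euclNorm_nonneg u)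
        calc ((N:ℝ)^4*cQ*cQi*K3) * |h|^p * euclNorm u
            = ((N:ℝ)^4*cQ*cQi*K3) * (|h|^p * euclNorm u) := by ring
          _ ≤ C * (|h|^p * euclNorm u) := mul_le_mul_of_nonneg_right hAC h2
          _ = C * |h|^p * euclNorm u := by ring
end

section
/- Let M be a complex N×N matrix and let ad_M be the linear operator on complex N×N matrices defined by ad_M(X) := MX − XM. Then M is diagonalizable over ℂ if and only if the kernel and the image of ad_M intersect trivially, i.e. Ker(ad_M) ∩ Im(ad_M) = {0}. -/
open Matrix

variable {N : ℕ}

lemma aux_mul_vecMulVec (A : Matrix (Fin N) (Fin N) ℂ) (v u : Fin N → ℂ) :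
    A * vecMulVec v u = vecMulVec (A.mulVec v) u := by
  ext i j
  simp only [Matrix.mul_apply, vecMulVec_apply, Matrix.mulVec, dotProduct,
    Finset.sum_mul, mul_assoc]

lemma aux_vecMulVec_mul (A : Matrix (Fin N) (Fin N) ℂ) (v u : Fin N → ℂ) :
    vecMulVec v u * A = vecMulVec v (u ᵥ* A) := by
  ext i j
  simp only [Matrix.mul_apply, vecMulVec_apply, Matrix.vecMul, dotProduct,
    Finset.mul_sum, mul_assoc]

lemma aux_comm_smul (A : Matrix (Fin N) (Fin N) ℂ) (μ : ℂ) (X : Matrix (Fin N) (Fin N) ℂ) :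
    (A - μ • 1) * X - X * (A - μ • 1) = A * X - X * A := by
  simp [Matrix.sub_mul, Matrix.mul_sub, Matrix.smul_mul, Matrix.mul_smul]

lemma aux_key (M : Matrix (Fin N) (Fin N) ℂ)
    (h : ∀ X : Matrix (Fin N) (Fin N) ℂ,
      M * (M * X - X * M) - (M * X - X * M) * M = 0 → M * X - X * M = 0)
    (μ : ℂ) (v : Fin N → ℂ)
    (hv : (M - μ • 1).mulVec ((M - μ • 1).mulVec v) = 0) :
    (M - μ • 1).mulVec v = 0 := by
  set A := M - μ • 1 with hA
  have h' : ∀ X : Matrix (Fin N) (Fin N) ℂ,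
      A * (A * X - X * A) - (A * X - X * A) * A = 0 → A * X - X * A = 0 := by
    intro X hX
    rw [hA, aux_comm_smul, aux_comm_smul] at hX
    rw [hA, aux_comm_smul]
    exact h X hX
  by_contra hw
  set w := A.mulVec v with hwdef
  have hdet : A.det = 0 := by
    rw [← Matrix.exists_mulVec_eq_zero_iff]
    exact ⟨w, hw, hv⟩
  obtain ⟨u, hu, huA⟩ := Matrix.exists_vecMul_eq_zero_iff.mpr hdet
  have h1 : A * vecMulVec v u - vecMulVec v u * A = vecMulVec w u := by
    rw [aux_mul_vecMulVec, aux_vecMulVec_mul, huA]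
    ext i j; simp [vecMulVec_apply, hwdef]
  have h2 : A * vecMulVec w u - vecMulVec w u * A = 0 := by
    rw [aux_mul_vecMulVec, aux_vecMulVec_mul, huA, hv]
    ext i j; simp [vecMulVec_apply]
  have h3 := h' (vecMulVec v u) (by rw [h1, h2])
  rw [h1] at h3
  obtain ⟨j, hj⟩ := Function.ne_iff.mp hu
  apply hw
  funext i
  have := congrFun (congrFun h3 i) j
  rw [vecMulVec_apply] at this
  rcases mul_eq_zero.mp this with h0 | h0
  · exact h0
  · exact absurd h0 hj

lemma aux_pow (M : Matrix (Fin N) (Fin N) ℂ)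
    (h : ∀ X : Matrix (Fin N) (Fin N) ℂ,
      M * (M * X - X * M) - (M * X - X * M) * M = 0 → M * X - X * M = 0)
    (μ : ℂ) (k : ℕ) : ∀ v : Fin N → ℂ,
    ((M - μ • 1) ^ k).mulVec v = 0 → (M - μ • 1).mulVec v = 0 := by
  induction k with
  | zero => intro v hv; simp only [pow_zero, Matrix.one_mulVec] at hv; simp [hv]
  | succ k ih =>
    intro v hv
    rw [pow_succ, ← Matrix.mulVec_mulVec] at hv
    exact aux_key M h μ v (ih _ hv)


lemma aux_conj (P D A : Matrix (Fin N) (Fin N) ℂ) [Invertible P] :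
    (P * D * P⁻¹) * A - A * (P * D * P⁻¹)
      = P * (D * (P⁻¹ * A * P) - (P⁻¹ * A * P) * D) * P⁻¹ := by
  simp [Matrix.mul_sub, Matrix.sub_mul, Matrix.mul_assoc,
    Matrix.mul_inv_of_invertible, Matrix.mul_inv_cancel_left_of_invertible, mul_one]

lemma aux_forward (d : Fin N → ℂ) (P : Matrix (Fin N) (Fin N) ℂ) (hP : IsUnit P.det) :
    LinearMap.ker (LinearMap.mulLeft ℂ (P * Matrix.diagonal d * P⁻¹)
        - LinearMap.mulRight ℂ (P * Matrix.diagonal d * P⁻¹))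
      ⊓ LinearMap.range (LinearMap.mulLeft ℂ (P * Matrix.diagonal d * P⁻¹)
        - LinearMap.mulRight ℂ (P * Matrix.diagonal d * P⁻¹)) = ⊥ := by
  haveI := P.invertibleOfIsUnitDet hP
  set M := P * Matrix.diagonal d * P⁻¹ with hM
  rw [eq_bot_iff]
  rintro Y hY
  obtain ⟨hker, X, hX⟩ := Submodule.mem_inf.mp hY
  rw [LinearMap.mem_ker, LinearMap.sub_apply, LinearMap.mulLeft_apply,
    LinearMap.mulRight_apply] at hker
  rw [LinearMap.sub_apply, LinearMap.mulLeft_apply, LinearMap.mulRight_apply] at hX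
  set D := Matrix.diagonal d with hD
  set Z := P⁻¹ * X * P with hZ
  set W := D * Z - Z * D with hW
  have hYW : Y = P * W * P⁻¹ := by rw [← hX, hM, aux_conj]
  have hkey : P * (D * W - W * D) * P⁻¹ = 0 := by
    have hYZ : P⁻¹ * Y * P = W := by
      rw [hYW]
      simp [Matrix.mul_assoc, Matrix.inv_mul_cancel_left_of_invertible,
        Matrix.inv_mul_of_invertible, mul_one]
    calc P * (D * W - W * D) * P⁻¹
        = P * (D * (P⁻¹ * Y * P) - (P⁻¹ * Y * P) * D) * P⁻¹ := by rw [hYZ]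
      _ = M * Y - Y * M := by rw [hM]; exact (aux_conj P D Y).symm
      _ = 0 := hker
  have hDW : D * W - W * D = 0 := by
    have : D * W - W * D = P⁻¹ * (P * (D * W - W * D) * P⁻¹) * P := by
      simp [Matrix.mul_assoc, Matrix.inv_mul_cancel_left_of_invertible,
        Matrix.inv_mul_of_invertible, Matrix.mul_inv_cancel_left_of_invertible]
    rw [this, hkey]
    simp
  have hW0 : W = 0 := by
    ext i j
    have e1 : (d i - d j) * W i j = 0 := by
      have h0 := congrFun (congrFun hDW i) j
      simp only [hW, hD, Matrix.sub_apply, Matrix.diagonal_mul, Matrix.mul_diagonal,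
        Matrix.zero_apply] at h0 ⊢
      linear_combination h0
    have e2 : W i j = (d i - d j) * Z i j := by
      simp only [hW, hD, Matrix.sub_apply, Matrix.diagonal_mul, Matrix.mul_diagonal]
      ring
    rcases eq_or_ne (d i) (d j) with hij | hij
    · rw [e2, hij, sub_self, zero_mul]; rfl
    · rcases mul_eq_zero.mp e1 with h0 | h0
      · exact absurd (sub_eq_zero.mp h0) hij
      · exact h0
  rw [Submodule.mem_bot, hYW, hW0]
  simp

lemma aux_backward (M : Matrix (Fin N) (Fin N) ℂ)
    (h : ∀ X : Matrix (Fin N) (Fin N) ℂ,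
      M * (M * X - X * M) - (M * X - X * M) * M = 0 → M * X - X * M = 0) :
    ∃ (d : Fin N → ℂ) (P : Matrix (Fin N) (Fin N) ℂ),
      IsUnit P.det ∧ M = P * Matrix.diagonal d * P⁻¹ := by
  classical
  set E : Set (Fin N → ℂ) := {v | ∃ μ : ℂ, M.mulVec v = μ • v} with hE
  set f : Module.End ℂ (Fin N → ℂ) := Matrix.toLinAlgEquiv' M with hf
  have hpow : ∀ (μ : ℂ) (k : ℕ) (v : Fin N → ℂ),
      ((f - μ • 1) ^ k) v = ((M - μ • 1) ^ k).mulVec v := by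
    intro μ k v
    have : f - μ • 1 = Matrix.toLinAlgEquiv' (M - μ • 1) := by
      rw [hf, map_sub, _root_.map_smul, _root_.map_one]
    rw [this, ← map_pow]
    rfl
  have hspan : Submodule.span ℂ E = ⊤ := by
    rw [eq_top_iff, ← Module.End.iSup_maxGenEigenspace_eq_top f]
    refine iSup_le fun μ => ?_
    intro v hv
    apply Submodule.subset_span
    rw [Module.End.mem_maxGenEigenspace] at hv
    obtain ⟨k, hk⟩ := hv
    rw [hpow] at hk
    have := aux_pow M h μ k v hk
    rw [Matrix.sub_mulVec, Matrix.smul_mulVec, Matrix.one_mulVec, sub_eq_zero] at this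
    exact ⟨μ, this⟩
  obtain ⟨s, hsE, hs_span, hs_li⟩ := exists_linearIndependent ℂ E
  have hs_top : ⊤ ≤ Submodule.span ℂ (Set.range ((↑) : s → (Fin N → ℂ))) := by
    rw [Subtype.range_coe, hs_span, hspan]
  let B : Module.Basis s ℂ (Fin N → ℂ) := Module.Basis.mk hs_li hs_top
  haveI : Fintype s := FiniteDimensional.fintypeBasisIndex B
  let e : s ≃ Fin N := B.indexEquiv (Pi.basisFun ℂ (Fin N))
  let B' : Module.Basis (Fin N) ℂ (Fin N → ℂ) := B.reindex e
  have hB' : ∀ i, ∃ μ : ℂ, M.mulVec (B' i) = μ • B' i := by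
    intro i
    have : B' i = ((e.symm i : s) : Fin N → ℂ) := by
      rw [Module.Basis.reindex_apply, Module.Basis.mk_apply]
    rw [this]
    exact hsE (e.symm i).2
  choose d hd using hB'
  set P : Matrix (Fin N) (Fin N) ℂ := (Pi.basisFun ℂ (Fin N)).toMatrix ⇑B' with hPdef
  haveI : Invertible P := (Pi.basisFun ℂ (Fin N)).invertibleToMatrix B'
  refine ⟨d, P, Matrix.isUnit_det_of_invertible P, ?_⟩
  have hP_apply : ∀ i j, P i j = B' j i := by
    intro i j
    rw [hPdef, Module.Basis.toMatrix_apply, Pi.basisFun_repr]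
  have hMP : M * P = P * Matrix.diagonal d := by
    ext i j
    have e1 : (M * P) i j = M.mulVec (B' j) i := by
      simp only [Matrix.mul_apply, Matrix.mulVec, dotProduct, hP_apply]
    rw [e1, hd j, Matrix.mul_diagonal, hP_apply]
    simp [mul_comm]
  exact ((Matrix.mul_inv_eq_iff_eq_mul_of_invertible P (P * Matrix.diagonal d) M).mpr
    hMP.symm).symm

/-- Lemma 2 of the paper.  A complex `N × N` matrix `M` is diagonalizable
over `ℂ` if and only if the kernel and the image of the linear operator
`ad_M : X ↦ M * X - X * M` on complex `N × N` matrices intersect trivially. -/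
theorem stmt_7 {N : ℕ} (M : Matrix (Fin N) (Fin N) ℂ) :
    (∃ (d : Fin N → ℂ) (P : Matrix (Fin N) (Fin N) ℂ),
        IsUnit P.det ∧ M = P * Matrix.diagonal d * P⁻¹)
      ↔ LinearMap.ker (LinearMap.mulLeft ℂ M - LinearMap.mulRight ℂ M)
          ⊓ LinearMap.range (LinearMap.mulLeft ℂ M - LinearMap.mulRight ℂ M) = ⊥ := by
  constructor
  · rintro ⟨d, P, hP, rfl⟩
    exact aux_forward d P hP
  · intro hbot
    apply aux_backward M
    intro X hX
    have hmem : (M * X - X * M) ∈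
        LinearMap.ker (LinearMap.mulLeft ℂ M - LinearMap.mulRight ℂ M)
          ⊓ LinearMap.range (LinearMap.mulLeft ℂ M - LinearMap.mulRight ℂ M) := by
      refine Submodule.mem_inf.mpr ⟨LinearMap.mem_ker.mpr ?_, LinearMap.mem_range.mpr ⟨X, ?_⟩⟩
      · simp only [LinearMap.sub_apply, LinearMap.mulLeft_apply, LinearMap.mulRight_apply]
        exact hX
      · simp only [LinearMap.sub_apply, LinearMap.mulLeft_apply, LinearMap.mulRight_apply]
    rw [hbot, Submodule.mem_bot] at hmem
    exact hmem
end

section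
/- Let A and B be real N×N matrices, let n ≥ 1, and let a₀, ..., a_{2n} ∈ ℂ and b₀, ..., b_{2n−1} ∈ ℂ be coefficients satisfying the symmetric-conjugate conditions a_{2n−j} = conj(a_j) for j = 0, ..., 2n and b_{2n−1−j} = conj(b_j) for j = 0, ..., 2n−1. Then the splitting operator S_h := exp(ih a₀ A) · exp(ih b₀ B) · exp(ih a₁ A) · ⋯ · exp(ih b_{2n−1} B) · exp(ih a_{2n} A) satisfies conj(S_h) = S_h^{-1} for all h ∈ ℝ. -/
open Matrix

/-- The splitting operator
`S_h = e^{i h a₀ A} e^{i h b₀ B} e^{i h a₁ A} ⋯ e^{i h b_{2n-1} B} e^{i h a_{2n} A}`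
built from real matrices `A`, `B` and complex coefficients `a`, `b`. -/
noncomputable def splittingOp {N : ℕ} (A B : Matrix (Fin N) (Fin N) ℝ) (n : ℕ)
    (a b : ℕ → ℂ) (h : ℝ) : Matrix (Fin N) (Fin N) ℂ :=
  (List.ofFn fun j : Fin (2 * n) =>
      NormedSpace.exp (((h : ℂ) * Complex.I * a j) • A.map Complex.ofReal) *
      NormedSpace.exp (((h : ℂ) * Complex.I * b j) • B.map Complex.ofReal)).prod *
  NormedSpace.exp (((h : ℂ) * Complex.I * a (2 * n)) • A.map Complex.ofReal)

/-- Entrywise conjugation commutes with the matrix exponential of a complex multiple of a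
real matrix, conjugating the scalar. -/
lemma conj_exp_smul {N : ℕ} (c : ℂ) (M : Matrix (Fin N) (Fin N) ℝ) :
    (NormedSpace.exp (c • M.map Complex.ofReal)).map (starRingEnd ℂ)
      = NormedSpace.exp ((starRingEnd ℂ c) • M.map Complex.ofReal) := by
  letI : SeminormedRing (Matrix (Fin N) (Fin N) ℂ) := Matrix.linftyOpSemiNormedRing
  letI : NormedRing (Matrix (Fin N) (Fin N) ℂ) := Matrix.linftyOpNormedRing
  letI : NormedAlgebra ℂ (Matrix (Fin N) (Fin N) ℂ) := Matrix.linftyOpNormedAlgebra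
  letI : NormedAlgebra ℚ (Matrix (Fin N) (Fin N) ℂ) := Matrix.linftyOpNormedAlgebra
  have hcont : Continuous ((starRingEnd ℂ).mapMatrix :
      Matrix (Fin N) (Fin N) ℂ →+* Matrix (Fin N) (Fin N) ℂ) := by
    show Continuous fun X : Matrix (Fin N) (Fin N) ℂ => X.map (starRingEnd ℂ)
    exact continuous_id.matrix_map Complex.continuous_conj
  have key := NormedSpace.map_exp ((starRingEnd ℂ).mapMatrix) hcont
    (c • M.map Complex.ofReal)
  rw [RingHom.mapMatrix_apply, RingHom.mapMatrix_apply] at key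
  refine key.trans ?_
  congr 1
  ext i j
  simp [Matrix.map_apply, Complex.conj_ofReal]

/-- Inverse of a splitting-type product: it is the product of the inverses of the factors
in reverse order. -/
lemma inv_split {N : ℕ} : ∀ (m : ℕ) (f g : ℕ → Matrix (Fin N) (Fin N) ℂ),
    ((List.ofFn fun j : Fin m => f j * g j).prod * f m)⁻¹
      = (List.ofFn fun j : Fin m => (f (m - j))⁻¹ * (g (m - 1 - j))⁻¹).prod * (f 0)⁻¹
  | 0, f, g => by simp
  | (m + 1), f, g => by
    have IH := inv_split m (fun j => f (j + 1)) (fun j => g (j + 1))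
    rw [List.ofFn_succ]
    simp only [Fin.val_zero, Fin.val_succ, List.prod_cons]
    rw [mul_assoc (f 0 * g 0), Matrix.mul_inv_rev, Matrix.mul_inv_rev (f 0), IH]
    have h1 : (fun j : Fin (m + 1) => (f (m + 1 - (j : ℕ)))⁻¹ * (g (m + 1 - 1 - (j : ℕ)))⁻¹)
        = fun j : Fin (m + 1) => (f (m + 1 - (j : ℕ)))⁻¹ * (g (m - (j : ℕ)))⁻¹ := by
      funext j
      norm_num
    rw [h1, List.ofFn_succ' (fun j : Fin (m + 1) => (f (m + 1 - (j : ℕ)))⁻¹ * (g (m - (j : ℕ)))⁻¹)]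
    simp only [Fin.coe_castSucc, Fin.val_last, List.concat_eq_append, List.prod_append,
      List.prod_cons, List.prod_nil, mul_one]
    have h2 : (fun j : Fin m => (f (m - (j : ℕ) + 1))⁻¹ * (g (m - 1 - (j : ℕ) + 1))⁻¹)
        = fun j : Fin m => (f (m + 1 - (j : ℕ)))⁻¹ * (g (m - (j : ℕ)))⁻¹ := by
      funext j
      have e1 : m - (j : ℕ) + 1 = m + 1 - (j : ℕ) := by omega
      have e2 : m - 1 - (j : ℕ) + 1 = m - (j : ℕ) := by omega
      rw [e1, e2]
    rw [h2]
    have e3 : m + 1 - m = 1 := by omega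
    have e4 : m - m = 0 := by omega
    rw [e3, e4]
    group

/-- If the coefficients satisfy the symmetric-conjugate conditions
`a_{2n-j} = conj (a_j)` for `j = 0, …, 2n` and `b_{2n-1-j} = conj (b_j)` for
`j = 0, …, 2n-1`, then the splitting operator
`S_h = e^{i h a₀ A} e^{i h b₀ B} ⋯ e^{i h b_{2n-1} B} e^{i h a_{2n} A}` satisfies
`conj (S_h) = S_h⁻¹` for every `h ∈ ℝ`. -/
theorem stmt_10 {N : ℕ} (A B : Matrix (Fin N) (Fin N) ℝ) (n : ℕ) (hn : 1 ≤ n)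
    (a b : ℕ → ℂ)
    (ha : ∀ j ≤ 2 * n, a (2 * n - j) = starRingEnd ℂ (a j))
    (hb : ∀ j ≤ 2 * n - 1, b (2 * n - 1 - j) = starRingEnd ℂ (b j)) :
    ∀ h : ℝ,
      (splittingOp A B n a b h).map (starRingEnd ℂ) = (splittingOp A B n a b h)⁻¹ := by
  intro h
  set φ := ((starRingEnd ℂ).mapMatrix : Matrix (Fin N) (Fin N) ℂ →+* Matrix (Fin N) (Fin N) ℂ)
    with hφ
  set f : ℕ → Matrix (Fin N) (Fin N) ℂ := fun j =>
    NormedSpace.exp (((h : ℂ) * Complex.I * a j) • A.map Complex.ofReal) with hf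
  set g : ℕ → Matrix (Fin N) (Fin N) ℂ := fun j =>
    NormedSpace.exp (((h : ℂ) * Complex.I * b j) • B.map Complex.ofReal) with hg
  have hS : splittingOp A B n a b h
      = (List.ofFn fun j : Fin (2 * n) => f j * g j).prod * f (2 * n) := rfl
  -- conjugate of an individual `f` factor
  have hcf : ∀ j ≤ 2 * n, (f j).map (starRingEnd ℂ) = (f (2 * n - j))⁻¹ := by
    intro j hj
    rw [hf]
    rw [conj_exp_smul]
    have : (starRingEnd ℂ) ((h : ℂ) * Complex.I * a j)
        = -(((h : ℂ) * Complex.I * a (2 * n - j))) := by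
      rw [ha j hj]
      simp [mul_comm, mul_assoc, mul_left_comm]
    rw [this, neg_smul, Matrix.exp_neg]
  have hcg : ∀ j ≤ 2 * n - 1, (g j).map (starRingEnd ℂ) = (g (2 * n - 1 - j))⁻¹ := by
    intro j hj
    rw [hg]
    rw [conj_exp_smul]
    have : (starRingEnd ℂ) ((h : ℂ) * Complex.I * b j)
        = -(((h : ℂ) * Complex.I * b (2 * n - 1 - j))) := by
      rw [hb j hj]
      simp [mul_comm, mul_assoc, mul_left_comm]
    rw [this, neg_smul, Matrix.exp_neg]
  -- compute the conjugate of the splitting operator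
  have hmap : ∀ X : Matrix (Fin N) (Fin N) ℂ, X.map (starRingEnd ℂ) = φ X := fun _ => rfl
  rw [hS, hmap, _root_.map_mul, map_list_prod, List.map_ofFn]
  have hlist : (List.ofFn ((fun X => φ X) ∘ fun j : Fin (2 * n) => f j * g j))
      = List.ofFn fun j : Fin (2 * n) => (f (2 * n - (j : ℕ)))⁻¹ * (g (2 * n - 1 - (j : ℕ)))⁻¹ := by
    congr 1
    funext j
    have hj1 : (j : ℕ) ≤ 2 * n := le_of_lt j.isLt
    have hj2 : (j : ℕ) ≤ 2 * n - 1 := by omega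
    show φ (f j * g j) = _
    rw [_root_.map_mul, ← hmap, ← hmap, hcf j hj1, hcg j hj2]
  have hlast : φ (f (2 * n)) = (f 0)⁻¹ := by
    rw [← hmap, hcf (2 * n) le_rfl]
    norm_num
  rw [hlist, hlast, inv_split (2 * n) f g]
end

section
/- Let H ∈ ℝ^{N×N} be a real matrix whose eigenvalues are all real and simple, and let S_h ∈ ℂ^{N×N} be a family of complex matrices depending smoothly on h such that conj(S_h) = S_h^{-1} and S_h = exp(ihH) + O(h^{p+1}) as h → 0 for some p ≥ 1. Then, provided |h| is small enough, S_h is conjugate to a unitary matrix: there exists an invertible complex matrix P_h such that P_h^{-1} S_h P_h is unitary. -/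
open Matrix Filter Asymptotics

attribute [local instance] Matrix.normedAddCommGroup Matrix.normedSpace


lemma diag_aux {N : ℕ} (T : Matrix (Fin N) (Fin N) ℂ)
    (hTdet : IsUnit T.det)
    (hrev : T.map (starRingEnd ℂ) = T⁻¹)
    (Z : Matrix (Fin N) (Fin N) ℝ)
    (hcomm : T * Z.map Complex.ofReal = Z.map Complex.ofReal * T)
    (lam : Fin N → ℝ) (hlam : Function.Injective lam)
    (hroot : ∀ j, (lam j • (1 : Matrix (Fin N) (Fin N) ℝ) - Z).det = 0) :
    ∃ P : Matrix (Fin N) (Fin N) ℂ,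
      IsUnit P.det ∧ P⁻¹ * T * P ∈ Matrix.unitaryGroup (Fin N) ℂ := by
  rcases Nat.eq_zero_or_pos N with hN | hN
  · subst hN
    refine ⟨1, by simp, ?_⟩
    rw [Matrix.mem_unitaryGroup_iff]
    apply Subsingleton.elim
  have : Nonempty (Fin N) := ⟨⟨0, hN⟩⟩
  -- real eigenvectors
  have hex : ∀ j, ∃ v : Fin N → ℝ, v ≠ 0 ∧ Z.mulVec v = lam j • v := by
    intro j
    obtain ⟨v, hv0, hv⟩ := (Matrix.exists_mulVec_eq_zero_iff).2 (hroot j)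
    refine ⟨v, hv0, ?_⟩
    rw [Matrix.sub_mulVec, Matrix.smul_mulVec, Matrix.one_mulVec, sub_eq_zero] at hv
    exact hv.symm
  choose v hv0 hv using hex
  set Zc := Z.map Complex.ofReal with hZc
  set w : Fin N → (Fin N → ℂ) := fun j i => ((v j i : ℝ) : ℂ) with hwdef
  have hw : ∀ j, Zc.mulVec (w j) = (lam j : ℂ) • w j := by
    intro j
    funext i
    have h1 := congrFun (hv j) i
    simp only [Matrix.mulVec, dotProduct, Pi.smul_apply, smul_eq_mul] at h1 ⊢
    simp only [hwdef, Matrix.map_apply, hZc]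
    push_cast
    exact_mod_cast congrArg (Complex.ofReal) h1
  have hw0 : ∀ j, w j ≠ 0 := by
    intro j hj
    apply hv0 j
    funext i
    have := congrFun hj i
    simpa [hwdef] using this
  -- linear independence
  have hli : LinearIndependent ℂ w := by
    apply Module.End.eigenvectors_linearIndependent' (Matrix.mulVecLin Zc)
      (fun j => (lam j : ℂ)) (fun a b hab => hlam (Complex.ofReal_injective (by simpa using hab)))
    intro j
    constructor
    · rw [Module.End.mem_eigenspace_iff, Matrix.mulVecLin_apply]
      exact hw j
    · exact hw0 j
  have hcard : Fintype.card (Fin N) = Module.finrank ℂ (Fin N → ℂ) := by simp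
  set B := basisOfLinearIndependentOfCardEqFinrank hli hcard with hBdef
  have hB : ∀ k, B k = w k := fun k => congrFun (coe_basisOfLinearIndependentOfCardEqFinrank hli hcard) k
  -- eigen property for T
  have key : ∀ j, ∃ μ : ℂ, T.mulVec (w j) = μ • w j := by
    intro j
    set u := T.mulVec (w j) with hu
    have hZu : Zc.mulVec u = (lam j : ℂ) • u := by
      rw [hu, Matrix.mulVec_mulVec, ← hcomm, ← Matrix.mulVec_mulVec, hw j,
        Matrix.mulVec_smul]
    have h1 : Zc.mulVec u = ∑ k, ((lam k : ℂ) * B.repr u k) • B k := by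
      conv_lhs => rw [← B.sum_repr u, ← Matrix.mulVecLin_apply, map_sum]
      refine Finset.sum_congr rfl fun k _ => ?_
      rw [_root_.map_smul, Matrix.mulVecLin_apply, hB k, hw k, smul_smul, mul_comm ((B.repr u) k)]
    have h2 : Zc.mulVec u = ∑ k, ((lam j : ℂ) * B.repr u k) • B k := by
      rw [hZu]
      conv_lhs => rw [← B.sum_repr u, Finset.smul_sum]
      refine Finset.sum_congr rfl fun k _ => ?_
      rw [smul_smul]
    have e1 : ⇑(B.repr (Zc.mulVec u)) = fun k => (lam k : ℂ) * B.repr u k := by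
      rw [h1]; exact B.repr_sum_self _
    have e2 : ⇑(B.repr (Zc.mulVec u)) = fun k => (lam j : ℂ) * B.repr u k := by
      rw [h2]; exact B.repr_sum_self _
    have h3 : ∀ k, (lam k : ℂ) * B.repr u k = (lam j : ℂ) * B.repr u k :=
      fun k => congrFun (e1.symm.trans e2) k
    have h5 : ∀ k, k ≠ j → B.repr u k = 0 := by
      intro k hk
      have := h3 k
      have hne : (lam k : ℂ) ≠ (lam j : ℂ) := by
        exact_mod_cast fun hc => hk (hlam (by exact_mod_cast hc))
      by_contra h0
      exact hne (mul_right_cancel₀ h0 this)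
    refine ⟨B.repr u j, ?_⟩
    calc u = ∑ k, B.repr u k • B k := (B.sum_repr u).symm
      _ = B.repr u j • B j := Finset.sum_eq_single j (fun k _ hk => by rw [h5 k hk, zero_smul])
            (fun h => absurd (Finset.mem_univ j) h)
      _ = B.repr u j • w j := by rw [hB j]
  choose s hs using key
  -- the matrix P
  set P := (Pi.basisFun ℂ (Fin N)).toMatrix ⇑B with hPdef
  have hPB : ∀ i j, P i j = w j i := by
    intro i j
    rw [hPdef, Module.Basis.toMatrix_apply, hB, Pi.basisFun_repr]
  have hPmul : P * B.toMatrix ⇑(Pi.basisFun ℂ (Fin N)) = 1 :=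
    Module.Basis.toMatrix_mul_toMatrix_flip _ _
  have hPunit : IsUnit P.det :=
    IsUnit.of_mul_eq_one _ (by rw [← Matrix.det_mul, hPmul, Matrix.det_one])
  -- T * P = P * diagonal s
  have hTP : T * P = P * Matrix.diagonal s := by
    ext i j
    have h7 := congrFun (hs j) i
    simp only [Matrix.mulVec, dotProduct, Pi.smul_apply, smul_eq_mul] at h7
    rw [Matrix.mul_apply, Matrix.mul_diagonal, hPB]
    calc ∑ k, T i k * P k j = ∑ k, T i k * w j k := by
          refine Finset.sum_congr rfl fun k _ => by rw [hPB]
      _ = s j * w j i := h7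
      _ = w j i * s j := mul_comm _ _
  -- unimodularity
  have hs1 : ∀ j, (starRingEnd ℂ) (s j) * s j = 1 := by
    intro j
    have hconjw : (T.map (starRingEnd ℂ)).mulVec (w j) = (starRingEnd ℂ) (s j) • w j := by
      funext i
      have h7 := congrFun (hs j) i
      simp only [Matrix.mulVec, dotProduct, Pi.smul_apply, smul_eq_mul] at h7 ⊢
      have h8 := congrArg (starRingEnd ℂ) h7
      simp only [map_sum, _root_.map_mul] at h8
      have hcw : ∀ k, (starRingEnd ℂ) (w j k) = w j k := fun k => Complex.conj_ofReal _
      calc ∑ k, T.map (starRingEnd ℂ) i k * w j k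
          = ∑ k, (starRingEnd ℂ) (T i k) * (starRingEnd ℂ) (w j k) := by
            refine Finset.sum_congr rfl fun k _ => by rw [Matrix.map_apply, hcw]
        _ = (starRingEnd ℂ) (s j) * (starRingEnd ℂ) (w j i) := h8
        _ = (starRingEnd ℂ) (s j) * w j i := by rw [hcw]
    have h9 : T.mulVec ((T⁻¹).mulVec (w j)) = w j := by
      rw [Matrix.mulVec_mulVec, Matrix.mul_nonsing_inv _ hTdet, Matrix.one_mulVec]
    rw [← hrev, hconjw, Matrix.mulVec_smul, hs j, smul_smul] at h9
    obtain ⟨i, hi⟩ : ∃ i, w j i ≠ 0 := by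
      by_contra hc
      push_neg at hc
      exact hw0 j (funext hc)
    have := congrFun h9 i
    simp only [Pi.smul_apply, smul_eq_mul] at this
    field_simp at this
    exact this
  -- conclude
  refine ⟨P, hPunit, ?_⟩
  have hD : P⁻¹ * T * P = Matrix.diagonal s := by
    rw [Matrix.mul_assoc, hTP, ← Matrix.mul_assoc, Matrix.nonsing_inv_mul _ hPunit, one_mul]
  rw [hD, Matrix.mem_unitaryGroup_iff']
  rw [star_eq_conjTranspose, Matrix.diagonal_conjTranspose, Matrix.diagonal_mul_diagonal]
  have : (fun i => (star s) i * s i) = fun _ => (1 : ℂ) := by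
    funext i
    exact hs1 i
  rw [this, Matrix.diagonal_one]



lemma sin_slope (a : ℝ) :
    Tendsto (fun h : ℝ => h⁻¹ * Real.sin (h * a)) (nhdsWithin 0 {(0:ℝ)}ᶜ) (nhds a) := by
  have hd : HasDerivAt (fun h : ℝ => Real.sin (h * a)) a 0 := by
    simpa [Function.comp_def] using (Real.hasDerivAt_sin (0 * a)).comp 0 ((hasDerivAt_id (0:ℝ)).mul_const a)
  refine (hasDerivAt_iff_tendsto_slope.1 hd).congr fun h => ?_
  simp [slope_def_field, div_eq_inv_mul]




/-- `H` is a real matrix whose eigenvalues are all real and simple (encoded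
by a real diagonalization `H = Q * diagonal d * Q⁻¹` with `d` injective), and `S h` is a smooth
reversible family consistent with `exp (i h H)` at order `p ≥ 1`.  Then, for `|h|` small enough,
`S h` is conjugate to a unitary matrix. -/
theorem stmt_12 {N : ℕ} (H : Matrix (Fin N) (Fin N) ℝ)
    (d : Fin N → ℝ) (Q : Matrix (Fin N) (Fin N) ℝ)
    (hQ : IsUnit Q.det) (hdiag : H = Q * Matrix.diagonal d * Q⁻¹)
    (hsimple : Function.Injective d)
    (S : ℝ → Matrix (Fin N) (Fin N) ℂ)
    (hsmooth : ContDiff ℝ (⊤ : ℕ∞) S)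
    (hrev : ∀ h : ℝ, IsUnit (S h).det → (S h).map (starRingEnd ℂ) = (S h)⁻¹)
    (p : ℕ) (hp : 1 ≤ p)
    (hconsist :
      (fun h : ℝ => S h - NormedSpace.exp (((h : ℂ) * Complex.I) • H.map Complex.ofReal))
        =O[nhds 0] fun h : ℝ => h ^ (p + 1)) :
    ∀ᶠ h : ℝ in nhds 0, ∃ P : Matrix (Fin N) (Fin N) ℂ,
      IsUnit P.det ∧ P⁻¹ * S h * P ∈ Matrix.unitaryGroup (Fin N) ℂ := by
  have hco : (Complex.ofReal : ℝ → ℂ) = ⇑Complex.ofRealHom := rfl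
  set E : ℝ → Matrix (Fin N) (Fin N) ℂ :=
    fun h => NormedSpace.exp (((h : ℂ) * Complex.I) • H.map Complex.ofReal) with hEdef
  have harg0 : (((0:ℝ) : ℂ) * Complex.I) • H.map Complex.ofReal = 0 := by
    norm_num
  -- S 0 = 1
  have hS0 : S 0 = 1 := by
    obtain ⟨C, hC⟩ := hconsist.bound
    have h0 := hC.self_of_nhds
    rw [harg0, NormedSpace.exp_zero] at h0
    simp only [norm_pow, norm_zero, zero_pow (Nat.succ_ne_zero p), mul_zero] at h0
    have := norm_le_zero_iff.1 h0
    rwa [sub_eq_zero] at this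
  -- determinant eventually nonzero
  have hdetev : ∀ᶠ h : ℝ in nhds 0, IsUnit (S h).det := by
    have hcd : ContinuousAt (fun h : ℝ => (S h).det) 0 :=
      (hsmooth.continuous.matrix_det).continuousAt
    have hne : (S 0).det ≠ 0 := by rw [hS0, Matrix.det_one]; exact one_ne_zero
    exact (hcd.eventually_ne hne).mono fun h hh => isUnit_iff_ne_zero.2 hh
  -- separation radius
  obtain ⟨r, hr, hsep⟩ : ∃ r : ℝ, 0 < r ∧ ∀ k l : Fin N, k ≠ l → 2 * r < |d k - d l| := by
    rcases (Finset.univ.offDiag (α := Fin N)).eq_empty_or_nonempty with he | hne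
    · refine ⟨1, one_pos, fun k l hkl => ?_⟩
      have : ((k, l) : Fin N × Fin N) ∈ Finset.univ.offDiag :=
        Finset.mem_offDiag.2 ⟨Finset.mem_univ _, Finset.mem_univ _, hkl⟩
      rw [he] at this
      exact absurd this (Finset.notMem_empty _)
    · set m := Finset.inf' _ hne (fun q : Fin N × Fin N => |d q.1 - d q.2|) with hm
      have hmpos : 0 < m := by
        rw [hm, Finset.lt_inf'_iff]
        intro q hq
        rw [Finset.mem_offDiag] at hq
        exact abs_pos.2 (sub_ne_zero.2 fun hc => hq.2.2 (hsimple hc))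
      refine ⟨m / 3, by linarith, fun k l hkl => ?_⟩
      have hle : m ≤ |d k - d l| := Finset.inf'_le (b := (k, l))
        (fun q : Fin N × Fin N => |d q.1 - d q.2|)
        (Finset.mem_offDiag.2 ⟨Finset.mem_univ _, Finset.mem_univ _, hkl⟩)
      linarith
  -- complex Q
  set Qc : Matrix (Fin N) (Fin N) ℂ := Q.map Complex.ofReal with hQcdef
  set Qc' : Matrix (Fin N) (Fin N) ℂ := (Q⁻¹).map Complex.ofReal with hQc'def
  have hQmul : Qc * Qc' = 1 := by
    rw [hQcdef, hQc'def, hco, ← Matrix.map_mul, Matrix.mul_nonsing_inv _ hQ]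
    exact Matrix.map_one _ (map_zero _) (map_one _)
  have hQcinv : Qc⁻¹ = Qc' := Matrix.inv_eq_right_inv hQmul
  have hQcdet : IsUnit Qc.det :=
    IsUnit.of_mul_eq_one _ (by rw [← Matrix.det_mul, hQmul, Matrix.det_one])
  -- explicit formula for E
  have hEeq : ∀ h : ℝ, E h =
      Qc * Matrix.diagonal (fun k => Complex.exp (((h * d k : ℝ) : ℂ) * Complex.I)) * Qc' := by
    intro h
    have harg : ((h : ℂ) * Complex.I) • H.map Complex.ofReal =
        Qc * Matrix.diagonal (fun k => ((h * d k : ℝ) : ℂ) * Complex.I) * Qc' := by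
      rw [hdiag, hco, Matrix.map_mul, Matrix.map_mul, ← hco, ← hQcdef, ← hQc'def,
        Matrix.diagonal_map Complex.ofReal_zero, ← Matrix.smul_mul, ← Matrix.mul_smul,
        ← Matrix.diagonal_smul]
      refine congrArg (fun X => Qc * X * Qc') ?_
      refine congrArg Matrix.diagonal ?_
      funext k
      simp only [Pi.smul_apply, Function.comp_apply, smul_eq_mul]
      push_cast
      ring
    rw [hEdef]
    show NormedSpace.exp (((h : ℂ) * Complex.I) • H.map Complex.ofReal) = _
    rw [harg, ← hQcinv,
      Matrix.exp_conj Qc _ ((Matrix.isUnit_iff_isUnit_det Qc).mpr hQcdet),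
      Matrix.exp_diagonal, Pi.exp_def]
    congr 2
    funext k
    rw [← Complex.exp_eq_exp_ℂ]
  -- imaginary part of E
  have hEim : ∀ (h : ℝ) (i j : Fin N),
      ((E h) i j).im = ∑ k, Q i k * (Q⁻¹) k j * Real.sin (h * d k) := by
    intro h i j
    rw [hEeq h]
    rw [Matrix.mul_apply, Complex.im_sum]
    refine Finset.sum_congr rfl fun k _ => ?_
    rw [Matrix.mul_diagonal]
    have hterm : Qc i k * Complex.exp (((h * d k : ℝ) : ℂ) * Complex.I) * Qc' k j =
        ((Q i k * (Q⁻¹) k j : ℝ) : ℂ) * Complex.exp (((h * d k : ℝ) : ℂ) * Complex.I) := by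
      rw [hQcdef, hQc'def]
      simp only [Matrix.map_apply]
      push_cast
      ring
    rw [hterm]
    simp only [Complex.mul_im, Complex.ofReal_re, Complex.ofReal_im,
      Complex.exp_ofReal_mul_I_im, zero_mul, add_zero]
  -- H entries
  have hHij : ∀ i j : Fin N, H i j = ∑ k, Q i k * (Q⁻¹) k j * d k := by
    intro i j
    rw [hdiag, Matrix.mul_apply]
    refine Finset.sum_congr rfl fun k _ => ?_
    rw [Matrix.mul_diagonal]
    ring
  -- entrywise limit of h⁻¹ * Im (S h)
  have hlim : ∀ i j : Fin N,
      Tendsto (fun h : ℝ => h⁻¹ * (S h i j).im) (nhdsWithin 0 {(0:ℝ)}ᶜ) (nhds (H i j)) := by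
    intro i j
    have t1 : Tendsto (fun h : ℝ => h⁻¹ * ((E h) i j).im)
        (nhdsWithin 0 {(0:ℝ)}ᶜ) (nhds (H i j)) := by
      have heq : (fun h : ℝ => h⁻¹ * ((E h) i j).im) =
          fun h : ℝ => ∑ k, Q i k * (Q⁻¹) k j * (h⁻¹ * Real.sin (h * d k)) := by
        funext h
        rw [hEim h i j, Finset.mul_sum]
        exact Finset.sum_congr rfl fun k _ => by ring
      rw [heq, hHij i j]
      exact tendsto_finset_sum _ fun k _ => tendsto_const_nhds.mul (sin_slope (d k))
    have t2 : Tendsto (fun h : ℝ => h⁻¹ * ((S h i j).im - ((E h) i j).im))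
        (nhdsWithin 0 {(0:ℝ)}ᶜ) (nhds 0) := by
      have hbig1 : (fun h : ℝ => (S h i j).im - ((E h) i j).im) =O[nhds 0]
          fun h : ℝ => h ^ (p + 1) := by
        refine IsBigO.trans ?_ hconsist
        refine IsBigO.of_bound 1 (Filter.Eventually.of_forall fun h => ?_)
        rw [one_mul, Real.norm_eq_abs]
        have h1 : (S h i j).im - ((E h) i j).im = ((S h - E h) i j).im := by
          simp [Matrix.sub_apply, Complex.sub_im]
        rw [h1]
        calc |((S h - E h) i j).im| ≤ ‖(S h - E h) i j‖ :=
              Complex.abs_im_le_norm _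
          _ = ‖(S h - E h) i j‖ := rfl
          _ ≤ ‖S h - E h‖ := Matrix.norm_entry_le_entrywise_sup_norm _
      have hbig2 : (fun h : ℝ => h⁻¹ * ((S h i j).im - ((E h) i j).im))
          =O[nhdsWithin 0 {(0:ℝ)}ᶜ] fun h : ℝ => h⁻¹ * h ^ (p + 1) :=
        (isBigO_refl (fun h : ℝ => h⁻¹) _).mul (hbig1.mono nhdsWithin_le_nhds)
      refine hbig2.trans_tendsto ?_
      have hc : Tendsto (fun h : ℝ => h ^ p) (nhdsWithin 0 {(0:ℝ)}ᶜ) (nhds 0) := by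
        refine Tendsto.mono_left ?_ nhdsWithin_le_nhds
        have := (continuous_pow p : Continuous fun a : ℝ => a ^ p).tendsto 0
        rwa [zero_pow (by omega : p ≠ 0)] at this
      refine hc.congr' ?_
      filter_upwards [eventually_mem_nhdsWithin] with h hh
      have hne : h ≠ 0 := hh
      rw [pow_succ]
      field_simp
    have hsum := t1.add t2
    rw [add_zero] at hsum
    refine hsum.congr fun h => ?_
    ring
  -- matrix-level limit
  set Zf : ℝ → Matrix (Fin N) (Fin N) ℝ :=
    fun h => h⁻¹ • Matrix.of (fun i j => (S h i j).im) with hZfdef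
  have hZt : Tendsto Zf (nhdsWithin 0 {(0:ℝ)}ᶜ) (nhds H) := by
    refine tendsto_pi_nhds.2 ?_
    intro i
    rw [tendsto_pi_nhds]
    intro j
    refine (hlim i j).congr fun h => ?_
    simp [hZfdef]
  -- determinant of t•1 - H
  have hQdet0 : Q.det ≠ 0 := hQ.ne_zero
  have hgH : ∀ t : ℝ, ((t • (1 : Matrix (Fin N) (Fin N) ℝ)) - H).det = ∏ k, (t - d k) := by
    intro t
    have hfact : Q * (t • (1 : Matrix (Fin N) (Fin N) ℝ) - Matrix.diagonal d) * Q⁻¹ =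
        t • (1 : Matrix (Fin N) (Fin N) ℝ) - H := by
      rw [Matrix.mul_sub, Matrix.sub_mul, hdiag]
      congr 1
      rw [Matrix.mul_smul, mul_one, Matrix.smul_mul, Matrix.mul_nonsing_inv _ hQ]
    rw [← hfact, Matrix.det_mul, Matrix.det_mul, Matrix.det_nonsing_inv, Ring.inverse_eq_inv,
      mul_comm Q.det _, mul_assoc, mul_inv_cancel₀ hQdet0, mul_one,
      Matrix.smul_one_eq_diagonal, Matrix.diagonal_sub, Matrix.det_diagonal]
  -- sign condition near H
  have hsign : ∀ᶠ M : Matrix (Fin N) (Fin N) ℝ in nhds H, ∀ j : Fin N,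
      (((d j - r) • (1 : Matrix (Fin N) (Fin N) ℝ) - M).det) *
        (((d j + r) • (1 : Matrix (Fin N) (Fin N) ℝ) - M).det) < 0 := by
    rw [eventually_all]
    intro j
    have hcont : ContinuousAt (fun M : Matrix (Fin N) (Fin N) ℝ =>
        (((d j - r) • (1 : Matrix (Fin N) (Fin N) ℝ) - M).det) *
        (((d j + r) • (1 : Matrix (Fin N) (Fin N) ℝ) - M).det)) H := by
      exact (((continuous_const.sub continuous_id).matrix_det).mul
        ((continuous_const.sub continuous_id).matrix_det)).continuousAt
    have hval : (((d j - r) • (1 : Matrix (Fin N) (Fin N) ℝ) - H).det) *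
        (((d j + r) • (1 : Matrix (Fin N) (Fin N) ℝ) - H).det) < 0 := by
      rw [hgH, hgH, ← Finset.prod_mul_distrib,
        ← Finset.mul_prod_erase _ _ (Finset.mem_univ j)]
      apply mul_neg_of_neg_of_pos
      · nlinarith [hr]
      · refine Finset.prod_pos fun k hk => ?_
        have hkj : k ≠ j := (Finset.mem_erase.1 hk).1
        have h2 := hsep j k (Ne.symm hkj)
        rcases lt_abs.mp h2 with h3 | h3 <;> nlinarith
    have hmem := hcont.preimage_mem_nhds (Iio_mem_nhds hval)
    exact eventually_of_mem hmem fun M hM => hM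
  -- the main eventual statement on the punctured neighborhood
  have hmain : ∀ᶠ h : ℝ in nhdsWithin 0 {(0:ℝ)}ᶜ,
      ∃ P : Matrix (Fin N) (Fin N) ℂ,
        IsUnit P.det ∧ P⁻¹ * S h * P ∈ Matrix.unitaryGroup (Fin N) ℂ := by
    filter_upwards [hZt.eventually hsign, hdetev.filter_mono nhdsWithin_le_nhds,
      eventually_mem_nhdsWithin] with h hsgn hdet hmem
    have hne : h ≠ 0 := hmem
    set M : Matrix (Fin N) (Fin N) ℝ := Zf h with hMdef
    -- roots of the characteristic polynomial of M
    have hroots : ∀ j : Fin N, ∃ t : ℝ, |t - d j| ≤ r ∧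
        ((t • (1 : Matrix (Fin N) (Fin N) ℝ)) - M).det = 0 := by
      intro j
      have hab : d j - r ≤ d j + r := by linarith
      have hcont : ContinuousOn (fun t : ℝ =>
          ((t • (1 : Matrix (Fin N) (Fin N) ℝ)) - M).det)
          (Set.Icc (d j - r) (d j + r)) :=
        (Continuous.matrix_det ((continuous_id.smul continuous_const).sub
          continuous_const)).continuousOn
      rcases mul_neg_iff.1 (hsgn j) with ⟨hpos, hneg⟩ | ⟨hneg, hpos⟩
      · obtain ⟨t, ht, h0⟩ := intermediate_value_Icc' hab hcont ⟨hneg.le, hpos.le⟩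
        exact ⟨t, abs_le.2 ⟨by linarith [ht.1], by linarith [ht.2]⟩, h0⟩
      · obtain ⟨t, ht, h0⟩ := intermediate_value_Icc hab hcont ⟨hneg.le, hpos.le⟩
        exact ⟨t, abs_le.2 ⟨by linarith [ht.1], by linarith [ht.2]⟩, h0⟩
    choose lam hlam1 hlam2 using hroots
    have hlaminj : Function.Injective lam := by
      intro j k hjk
      by_contra hne2
      have h2 := hsep j k hne2
      have h3 := hlam1 j
      have h4 := hlam1 k
      have h5 : |d j - d k| ≤ 2 * r := by
        have : d j - d k = -(lam j - d j) + (lam k - d k) := by rw [hjk]; ring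
        rw [this]
        calc |(-(lam j - d j)) + (lam k - d k)| ≤ |(-(lam j - d j))| + |lam k - d k| :=
              abs_add_le _ _
          _ ≤ r + r := by rw [abs_neg]; exact add_le_add h3 h4
          _ = 2 * r := by ring
      linarith
    -- commutation
    have hinv : (S h).map (starRingEnd ℂ) = (S h)⁻¹ := hrev h hdet
    have hMc : M.map Complex.ofReal =
        (((h : ℂ))⁻¹ * (2 * Complex.I)⁻¹) • (S h - (S h).map (starRingEnd ℂ)) := by
      ext i j
      simp only [Matrix.map_apply, Matrix.smul_apply, Matrix.sub_apply, Matrix.of_apply,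
        smul_eq_mul, hMdef, hZfdef]
      rw [Complex.sub_conj]
      have hI : (2 * Complex.I) ≠ 0 := by simp [Complex.I_ne_zero]
      have hh : ((h : ℂ)) ≠ 0 := Complex.ofReal_ne_zero.2 hne
      field_simp
      push_cast
      field_simp
    have hcomm : S h * M.map Complex.ofReal = M.map Complex.ofReal * S h := by
      have hc2 : S h * (S h - (S h).map (starRingEnd ℂ)) =
          (S h - (S h).map (starRingEnd ℂ)) * S h := by
        rw [hinv, Matrix.mul_sub, Matrix.sub_mul, Matrix.mul_nonsing_inv _ hdet,
          Matrix.nonsing_inv_mul _ hdet]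
      rw [hMc, Matrix.mul_smul, Matrix.smul_mul, hc2]
    exact diag_aux (S h) hdet hinv M hcomm lam hlaminj hlam2
  -- combine with the point h = 0
  have h0case : ∃ P : Matrix (Fin N) (Fin N) ℂ,
      IsUnit P.det ∧ P⁻¹ * S 0 * P ∈ Matrix.unitaryGroup (Fin N) ℂ := by
    refine ⟨1, by simp, ?_⟩
    have hone : (1 : Matrix (Fin N) (Fin N) ℂ)⁻¹ = 1 := Matrix.inv_eq_right_inv (by rw [one_mul])
    rw [hS0, hone, one_mul, mul_one, Matrix.mem_unitaryGroup_iff]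
    simp
  rw [eventually_nhdsWithin_iff] at hmain
  filter_upwards [hmain] with h hh
  by_cases hhe : h = 0
  · rw [hhe]; exact h0case
  · exact hh (by simpa using hhe)
end
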